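/- arXiv:0905.1181 — 10 statements merged into one kernel-verified Lean document; each statement's English description precedes it below -/
import Mathlib

section
/- For all integers n ≥ 1, the following identity holds in Q(u_1,…,u_n,v_1,…,v_n). Let G be the group of pairs w = (σ,η) with σ ∈ S_n and η ∈ {±1}^n, acting by the Q-algebra automorphism sending u_i to u_{σ(i)}^{η_i} and fixing each v_j, with sgn(w) := sgn(σ)·∏_{i=1}^n η_i. Then ∏_{1≤i<j≤n}(u_i/u_j − u_j/u_i)(u_i u_j − u_i^{−1}u_j^{−1}) · ∏_{i=1}^n (u_i^2 − u_i^{−2}) · ∏_{1≤j<k≤n}(v_j/v_k − v_k/v_j)(v_j v_k − v_j^{−1}v_k^{−1}) · ∏_{j=1}^n (v_j − v_j^{−1}) = (∏_{i=1}^n ∏_{j=1}^n (u_i v_j + u_i^{−1}v_j^{−1})(u_i/v_j + v_j/u_i)) · (∏_{i=1}^n (u_i + u_i^{−1})) · Σ_{w=(σ,η)∈G} sgn(w) · (∏_{i=1}^{n} u_{σ(i)}^{η_i}) · (∏_{j=1}^n v_j^{−1}) / ∏_{i=1}^{n} (1 + u_{σ(i)}^{2η_i}·v_i^{−2}). -/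
/-!
Summing over the signs `η` first, the sum factorizes site by site: with `u = u_{σ(i)}`, `v = v_i`,
the two terms `η_i = ±1` combine to `(u - u⁻¹)(v - v⁻¹) / (a + b)`, where `a = u² + u⁻²` and
`b = v² + v⁻²`. The remaining alternating sum over `σ` is the Cauchy determinant
`det (1 / (a_i + b_j))`, and its product formula gives the left-hand side: each odd factor
`(u_i v_j + u_i⁻¹ v_j⁻¹)(u_i / v_j + v_j / u_i)` equals `a_i + b_j` and cancels the Cauchy
denominator, while `(x / y - y / x)(x y - x⁻¹ y⁻¹) = a(x) - a(y)` produces the even factors.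
-/

open Finset

section

variable {K : Type*} [Field K]

namespace Matrix

def cauchy {m n : Type*} (a : m → K) (b : n → K) : Matrix m n K :=
  of fun i j => (a i + b j)⁻¹

theorem det_cauchy_succ {n : ℕ} (a b : Fin (n + 1) → K) (h : ∀ i j, a i + b j ≠ 0) :
    (cauchy a b).det = (a 0 + b 0)⁻¹ *
      ((∏ i : Fin n, (a i.succ - a 0) / (a i.succ + b 0)) *
        ((∏ j : Fin n, (b j.succ - b 0) / (a 0 + b j.succ)) *
          (cauchy (Fin.tail a) (Fin.tail b)).det)) := by
  set A := cauchy a b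
  -- subtracting `(a 0 + b 0) / (a i + b 0)` times row `0` from row `i` clears the first column
  set c : Fin (n + 1) → K := Fin.cons 0 fun i => (a 0 + b 0) / (a i.succ + b 0)
  set B : Matrix (Fin (n + 1)) (Fin (n + 1)) K := of fun i j => A i j - c i * A 0 j
  have hAB : A.det = B.det :=
    det_eq_of_forall_row_eq_smul_add_const c 0 rfl fun i j => by simp [B, c]
  have hcol : ∀ i : Fin n, B i.succ 0 = 0 := fun i => by
    have := h i.succ 0
    have := h 0 0
    simp only [cauchy, of_apply, Fin.cons_succ, B, A, c]
    field_simp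
    ring
  have hminor : B.submatrix Fin.succ Fin.succ = of fun i j =>
      (a i.succ - a 0) / (a i.succ + b 0) * (of fun i j =>
        (b j.succ - b 0) / (a 0 + b j.succ) * cauchy (Fin.tail a) (Fin.tail b) i j) i j := by
    ext i j
    have := h i.succ j.succ
    have := h i.succ 0
    have := h 0 j.succ
    have := h 0 0
    simp only [cauchy, of_apply, submatrix_apply, Fin.cons_succ, Fin.tail, B, A, c]
    field_simp
    ring
  rw [hAB, det_succ_column_zero, Fin.sum_univ_succ]
  simp only [hcol, mul_zero, zero_mul, sum_const_zero, add_zero, Fin.succAbove_zero, hminor,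
    det_mul_column, det_mul_row]
  simp [B, c, A, cauchy]

theorem det_cauchy {n : ℕ} (a b : Fin n → K) (h : ∀ i j, a i + b j ≠ 0) :
    (cauchy a b).det =
      (∏ i, ∏ j ∈ Ioi i, (a j - a i) * (b j - b i)) / ∏ i, ∏ j, (a i + b j) := by
  induction n with
  | zero => simp
  | succ n ih =>
    rw [det_cauchy_succ a b h, ih (Fin.tail a) (Fin.tail b) fun i j => h i.succ j.succ]
    have hrow : ∏ j : Fin n, (a 0 + b j.succ) ≠ 0 := prod_ne_zero_iff.2 fun j _ => h 0 j.succ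
    have hcol : ∏ i : Fin n, (a i.succ + b 0) ≠ 0 := prod_ne_zero_iff.2 fun i _ => h i.succ 0
    have htail : ∏ i : Fin n, ∏ j : Fin n, (a i.succ + b j.succ) ≠ 0 :=
      prod_ne_zero_iff.2 fun i _ => prod_ne_zero_iff.2 fun j _ => h i.succ j.succ
    have h00 := h 0 0
    simp only [Fin.prod_univ_succ, Fin.prod_Ioi_zero, Fin.prod_Ioi_succ, prod_mul_distrib,
      prod_div_distrib, Fin.tail]
    field_simp

end Matrix

theorem sum_sign_mul_prod_inv_add {n : ℕ} (a b : Fin n → K) (h : ∀ i j, a i + b j ≠ 0) :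
    ∑ σ : Equiv.Perm (Fin n), ((Equiv.Perm.sign σ : ℤ) : K) * ∏ i, (a (σ i) + b i)⁻¹ =
      (∏ i, ∏ j ∈ Ioi i, (a j - a i) * (b j - b i)) / ∏ i, ∏ j, (a i + b j) := by
  rw [← Matrix.det_cauchy a b h, Matrix.det_apply]
  simp [Matrix.cauchy, Units.smul_def]

theorem sum_pi_units_mul_prod {ι : Type*} [Fintype ι] [DecidableEq ι] (s : ℤˣ)
    (g : ι → ℤˣ → K) :
    ∑ η : ι → ℤˣ, (((s * ∏ i, η i : ℤˣ) : ℤ) : K) * ∏ i, g i (η i) =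
      ((s : ℤ) : K) * ∏ i, ∑ e : ℤˣ, ((e : ℤ) : K) * g i e := by
  rw [Fintype.prod_sum, mul_sum]
  refine sum_congr rfl fun η _ => ?_
  push_cast
  rw [prod_mul_distrib]
  ring

theorem sq_add_inv_sq_add_sq_add_inv_sq_eq {U V : K} (hU : U ≠ 0) (hV : V ≠ 0) :
    U ^ 2 + U⁻¹ ^ 2 + (V ^ 2 + V⁻¹ ^ 2) =
      (U ^ 2 + V ^ 2) * (U ^ 2 * V ^ 2 + 1) / (U * V) ^ 2 := by
  field_simp
  ring

theorem sum_units_zpow_div {U V : K} (hU : U ≠ 0) (hV : V ≠ 0) (h₁ : U ^ 2 + V ^ 2 ≠ 0)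
    (h₂ : U ^ 2 * V ^ 2 + 1 ≠ 0) :
    ∑ e : ℤˣ, ((e : ℤ) : K) * (U ^ (e : ℤ) * V⁻¹ / (1 + U ^ (2 * (e : ℤ)) * V ^ (-2 : ℤ))) =
      (U - U⁻¹) * (V - V⁻¹) / (U ^ 2 + U⁻¹ ^ 2 + (V ^ 2 + V⁻¹ ^ 2)) := by
  rw [sq_add_inv_sq_add_sq_add_inv_sq_eq hU hV, show (univ : Finset ℤˣ) = {1, -1} from rfl,
    sum_pair (by decide)]
  simp only [Units.val_one, Units.val_neg, zpow_neg, mul_one, mul_neg, zpow_ofNat]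
  have e₁ : 1 + U ^ 2 * (V ^ 2)⁻¹ = (U ^ 2 + V ^ 2) / V ^ 2 := by field_simp; ring
  have e₂ : 1 + (U ^ 2)⁻¹ * (V ^ 2)⁻¹ = (U ^ 2 * V ^ 2 + 1) / (U ^ 2 * V ^ 2) := by field_simp
  push_cast
  rw [e₁, e₂]
  field_simp
  ring

theorem sum_pi_units_prod_zpow_div {n : ℕ} (s : ℤˣ) (U V : Fin n → K) (hU : ∀ i, U i ≠ 0)
    (hV : ∀ i, V i ≠ 0) (h₁ : ∀ i, U i ^ 2 + V i ^ 2 ≠ 0)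
    (h₂ : ∀ i, U i ^ 2 * V i ^ 2 + 1 ≠ 0) :
    ∑ η : Fin n → ℤˣ, (((s * ∏ i, η i : ℤˣ) : ℤ) : K) *
        ((∏ i, U i ^ (η i : ℤ)) * (∏ i, (V i)⁻¹) /
          ∏ i, (1 + U i ^ (2 * (η i : ℤ)) * V i ^ (-2 : ℤ))) =
      ((s : ℤ) : K) * ∏ i, (U i - (U i)⁻¹) * (V i - (V i)⁻¹) /
        (U i ^ 2 + (U i)⁻¹ ^ 2 + (V i ^ 2 + (V i)⁻¹ ^ 2)) := by
  simp only [← prod_mul_distrib, ← prod_div_distrib]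
  rw [sum_pi_units_mul_prod s fun i e =>
    U i ^ (e : ℤ) * (V i)⁻¹ / (1 + U i ^ (2 * (e : ℤ)) * V i ^ (-2 : ℤ))]
  simp only [sum_units_zpow_div (hU _) (hV _) (h₁ _) (h₂ _)]

theorem div_sub_div_mul_mul_sub_inv_mul_inv {x y : K} (hx : x ≠ 0) (hy : y ≠ 0) :
    (x / y - y / x) * (x * y - x⁻¹ * y⁻¹) = x ^ 2 + x⁻¹ ^ 2 - (y ^ 2 + y⁻¹ ^ 2) := by
  field_simp
  ring

theorem mul_add_inv_mul_inv_mul_div_add_div {x y : K} (hx : x ≠ 0) (hy : y ≠ 0) :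
    (x * y + x⁻¹ * y⁻¹) * (x / y + y / x) = x ^ 2 + x⁻¹ ^ 2 + (y ^ 2 + y⁻¹ ^ 2) := by
  field_simp
  ring

theorem zpow_two_sub_zpow_neg_two (x : K) :
    x ^ (2 : ℤ) - x ^ (-2 : ℤ) = (x + x⁻¹) * (x - x⁻¹) := by
  rw [zpow_neg, zpow_ofNat]
  ring

theorem bnn_denominator_identity_of_ne_zero {n : ℕ} (u v : Fin n → K) (hu : ∀ i, u i ≠ 0)
    (hv : ∀ j, v j ≠ 0) (h₁ : ∀ i j, u i ^ 2 + v j ^ 2 ≠ 0)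
    (h₂ : ∀ i j, u i ^ 2 * v j ^ 2 + 1 ≠ 0) :
    (∏ i : Fin n, ∏ j ∈ Ioi i, ((u i / u j - u j / u i) * (u i * u j - (u i)⁻¹ * (u j)⁻¹))) *
      (∏ i : Fin n, (u i ^ (2 : ℤ) - u i ^ (-2 : ℤ))) *
      (∏ j : Fin n, ∏ k ∈ Ioi j, ((v j / v k - v k / v j) * (v j * v k - (v j)⁻¹ * (v k)⁻¹))) *
      (∏ j : Fin n, (v j - (v j)⁻¹)) =
    (∏ i : Fin n, ∏ j : Fin n, ((u i * v j + (u i)⁻¹ * (v j)⁻¹) * (u i / v j + v j / u i))) *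
      (∏ i : Fin n, (u i + (u i)⁻¹)) *
      ∑ σ : Equiv.Perm (Fin n), ∑ η : Fin n → ℤˣ,
        (((Equiv.Perm.sign σ * ∏ i, η i : ℤˣ) : ℤ) : K) *
          ((∏ i : Fin n, u (σ i) ^ (η i : ℤ)) * (∏ j : Fin n, (v j)⁻¹) /
            ∏ i : Fin n, (1 + u (σ i) ^ (2 * (η i : ℤ)) * v i ^ (-2 : ℤ))) := by
  set a := fun i => u i ^ 2 + (u i)⁻¹ ^ 2
  set b := fun j => v j ^ 2 + (v j)⁻¹ ^ 2
  have hab : ∀ i j, a i + b j ≠ 0 := fun i j => by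
    simp only [a, b, sq_add_inv_sq_add_sq_add_inv_sq_eq (hu i) (hv j)]
    exact div_ne_zero (mul_ne_zero (h₁ i j) (h₂ i j)) (pow_ne_zero 2 (mul_ne_zero (hu i) (hv j)))
  have hsum_η : ∀ σ : Equiv.Perm (Fin n), ∑ η : Fin n → ℤˣ,
        (((Equiv.Perm.sign σ * ∏ i, η i : ℤˣ) : ℤ) : K) *
          ((∏ i : Fin n, u (σ i) ^ (η i : ℤ)) * (∏ j : Fin n, (v j)⁻¹) /
            ∏ i : Fin n, (1 + u (σ i) ^ (2 * (η i : ℤ)) * v i ^ (-2 : ℤ))) =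
      (∏ i, (u i - (u i)⁻¹)) * (∏ j, (v j - (v j)⁻¹)) *
        (((Equiv.Perm.sign σ : ℤ) : K) * ∏ i, (a (σ i) + b i)⁻¹) := fun σ => by
    rw [sum_pi_units_prod_zpow_div _ (fun i => u (σ i)) v (fun i => hu (σ i)) hv
      (fun i => h₁ (σ i) i) (fun i => h₂ (σ i) i)]
    simp only [div_eq_mul_inv, prod_mul_distrib, Equiv.prod_comp σ fun i => u i - (u i)⁻¹]
    ring
  have hodd : ∀ i j, (u i * v j + (u i)⁻¹ * (v j)⁻¹) * (u i / v j + v j / u i) = a i + b j :=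
    fun i j => mul_add_inv_mul_inv_mul_div_add_div (hu i) (hv j)
  have heven : ∀ i j, (a j - a i) * (b j - b i) =
      ((u i / u j - u j / u i) * (u i * u j - (u i)⁻¹ * (u j)⁻¹)) *
        ((v i / v j - v j / v i) * (v i * v j - (v i)⁻¹ * (v j)⁻¹)) := fun i j => by
    rw [div_sub_div_mul_mul_sub_inv_mul_inv (hu i) (hu j),
      div_sub_div_mul_mul_sub_inv_mul_inv (hv i) (hv j)]
    ring
  have hden : ∏ i, ∏ j, (a i + b j) ≠ 0 :=
    prod_ne_zero_iff.2 fun i _ => prod_ne_zero_iff.2 fun j _ => hab i j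
  rw [sum_congr rfl fun σ _ => hsum_η σ, ← mul_sum, sum_sign_mul_prod_inv_add a b hab]
  simp only [hodd, heven, prod_mul_distrib, zpow_two_sub_zpow_neg_two]
  field_simp

end

theorem Bnn_denominator_identity_general (n : ℕ)
    (K : Type*) [Field K] [Algebra (MvPolynomial (Fin n ⊕ Fin n) ℚ) K]
    [IsFractionRing (MvPolynomial (Fin n ⊕ Fin n) ℚ) K]
    (u : Fin n → K) (v : Fin n → K)
    (hu : ∀ i, u i = algebraMap (MvPolynomial (Fin n ⊕ Fin n) ℚ) K
      (MvPolynomial.X (Sum.inl i)))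
    (hv : ∀ j, v j = algebraMap (MvPolynomial (Fin n ⊕ Fin n) ℚ) K
      (MvPolynomial.X (Sum.inr j))) :
    (∏ i : Fin n, ∏ j ∈ Finset.Ioi i,
        ((u i / u j - u j / u i) * (u i * u j - (u i)⁻¹ * (u j)⁻¹))) *
      (∏ i : Fin n, (u i ^ (2 : ℤ) - u i ^ (-2 : ℤ))) *
      (∏ j : Fin n, ∏ k ∈ Finset.Ioi j,
        ((v j / v k - v k / v j) * (v j * v k - (v j)⁻¹ * (v k)⁻¹))) *
      (∏ j : Fin n, (v j - (v j)⁻¹)) =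
    (∏ i : Fin n, ∏ j : Fin n,
        ((u i * v j + (u i)⁻¹ * (v j)⁻¹) * (u i / v j + v j / u i))) *
      (∏ i : Fin n, (u i + (u i)⁻¹)) *
      ∑ σ : Equiv.Perm (Fin n), ∑ η : Fin n → ℤˣ,
        (((Equiv.Perm.sign σ * ∏ i, η i : ℤˣ) : ℤ) : K) *
          ((∏ i : Fin n, u (σ i) ^ ((η i : ℤ))) *
           (∏ j : Fin n, (v j)⁻¹) /
           ∏ i : Fin n, (1 + u (σ i) ^ (2 * ((η i) : ℤ)) * v i ^ (-2 : ℤ))) := by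
  open MvPolynomial in
  have hne : ∀ p, eval 1 p ≠ 0 → algebraMap (MvPolynomial (Fin n ⊕ Fin n) ℚ) K p ≠ 0 :=
    fun p hp => (map_ne_zero_iff _ (IsFractionRing.injective _ K)).2 fun h => hp (by simp [h])
  refine bnn_denominator_identity_of_ne_zero u v (fun i => ?_) (fun j => ?_) (fun i j => ?_)
    (fun i j => ?_)
  · exact hu i ▸ hne _ (by simp)
  · exact hv j ▸ hne _ (by simp)
  · rw [hu, hv, ← map_pow, ← map_pow, ← map_add]
    exact hne _ (by norm_num)
  · rw [hu, hv, ← map_pow, ← map_pow, ← map_mul,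
      ← map_one (algebraMap (MvPolynomial (Fin n ⊕ Fin n) ℚ) K), ← map_add]
    exact hne _ (by norm_num)

/-- Weyl denominator identity for `B(n,n) = osp(2n+1|2n)` with `Δ^#` of type
`C_n`, in `ℚ(u₁,…,u_n,v₁,…,v_n)`, with `uᵢ = e^{εᵢ/2}`, `vⱼ = e^{δⱼ/2}`;
`W^#` of type `C_n` is modelled by pairs `(σ,η)`, `σ ∈ S_n`, `η ∈ {±1}^n`,
acting by `uᵢ ↦ u_{σ(i)}^{ηᵢ}`, with sign `sgn(σ)·∏ηᵢ`. -/
theorem Bnn_denominator_identity (n : ℕ) (hn : 1 ≤ n)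
    (K : Type*) [Field K] [Algebra (MvPolynomial (Fin n ⊕ Fin n) ℚ) K]
    [IsFractionRing (MvPolynomial (Fin n ⊕ Fin n) ℚ) K]
    (u : Fin n → K) (v : Fin n → K)
    (hu : ∀ i, u i = algebraMap (MvPolynomial (Fin n ⊕ Fin n) ℚ) K
      (MvPolynomial.X (Sum.inl i)))
    (hv : ∀ j, v j = algebraMap (MvPolynomial (Fin n ⊕ Fin n) ℚ) K
      (MvPolynomial.X (Sum.inr j))) :
    (∏ i : Fin n, ∏ j ∈ Finset.Ioi i,
        ((u i / u j - u j / u i) * (u i * u j - (u i)⁻¹ * (u j)⁻¹))) *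
      (∏ i : Fin n, (u i ^ (2 : ℤ) - u i ^ (-2 : ℤ))) *
      (∏ j : Fin n, ∏ k ∈ Finset.Ioi j,
        ((v j / v k - v k / v j) * (v j * v k - (v j)⁻¹ * (v k)⁻¹))) *
      (∏ j : Fin n, (v j - (v j)⁻¹)) =
    (∏ i : Fin n, ∏ j : Fin n,
        ((u i * v j + (u i)⁻¹ * (v j)⁻¹) * (u i / v j + v j / u i))) *
      (∏ i : Fin n, (u i + (u i)⁻¹)) *
      ∑ σ : Equiv.Perm (Fin n), ∑ η : Fin n → ℤˣ,
        (((Equiv.Perm.sign σ * ∏ i, η i : ℤˣ) : ℤ) : K) *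
          ((∏ i : Fin n, u (σ i) ^ ((η i : ℤ))) *
           (∏ j : Fin n, (v j)⁻¹) /
           ∏ i : Fin n, (1 + u (σ i) ^ (2 * ((η i) : ℤ)) * v i ^ (-2 : ℤ))) :=
  Bnn_denominator_identity_general n K u v hu hv
end

section
/- Let n ≥ 1 and let S be any subset of {(i,j) : 1 ≤ i < j ≤ n}. Set A(S) := {w ∈ S_n : w(i) < w(j) for all (i,j) ∈ S} and a(S) := Σ_{w∈A(S)} sgn(w). Then, in the field Q(x_1,…,x_n) of rational functions over Q, a(S) · ∏_{1≤i<j≤n} (1 − x_j/x_i)/(1 + x_j/x_i) = Σ_{w∈S_n} sgn(w) · ∏_{(i,j)∈S} (1 + x_{w(j)}/x_{w(i)})^{−1}. -/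
/-!
Both sides are additive in `S` under splitting a pair `{i, j}` not yet covered by `S` into its
two orientations: linear extensions split according to whether `w i < w j`, and the weights
satisfy `(1 + b/a)⁻¹ + (1 + a/b)⁻¹ = 1`. This reduces the identity to tournaments `E`. For a
tournament, multiplying the right-hand side by `∏_{i<j} (x_i + x_j)` gives the alternant
`det (x_i ^ outdeg j)`. It vanishes unless the out-degrees are distinct, and distinct out-degrees
force `E` to be transitive: it then has a unique linear extension `w`, the out-degrees are
`n - 1 - w j`, and the alternant is `sgn w` times the Vandermonde product `∏_{i<j} (x_i - x_j)`.
-/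

open Finset Equiv

section Orientation

variable {α : Type*}

/-- In particular `E` has no loop `(i, i)`. -/
def IsOriented (E : Finset (α × α)) : Prop := ∀ p ∈ E, p.swap ∉ E

def IsTournament (E : Finset (α × α)) : Prop :=
  IsOriented E ∧ ∀ i j, i ≠ j → (i, j) ∈ E ∨ (j, i) ∈ E

variable {E : Finset (α × α)}

lemma IsOriented.fst_ne_snd (hE : IsOriented E) {p : α × α} (h : p ∈ E) : p.1 ≠ p.2 := by
  intro hp
  exact hE p h (by rwa [show p.swap = p from Prod.ext hp.symm hp])

lemma IsOriented.insert [DecidableEq α] (hE : IsOriented E) {q : α × α} (hq : q.1 ≠ q.2)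
    (hqs : q.swap ∉ E) : IsOriented (insert q E) := by
  intro p hp hps
  rw [mem_insert] at hp hps
  rcases hp with rfl | hp <;> rcases hps with hps | hps
  · exact hq (congrArg Prod.snd hps)
  · exact hqs hps
  · exact hqs (by rw [← hps, Prod.swap_swap]; exact hp)
  · exact hE p hp hps

lemma IsTournament.swap_mem_of_not_mem (hE : IsTournament E) {p : α × α} (hp : p.1 ≠ p.2)
    (h : p ∉ E) : p.swap ∈ E :=
  (hE.2 p.1 p.2 hp).resolve_left h

lemma IsTournament.map (hE : IsTournament E) (w : Perm α) :
    IsTournament (E.map (w.prodCongr w).toEmbedding) := by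
  refine ⟨fun p hp hps => ?_, fun i j hij => ?_⟩
  · rw [mem_map_equiv] at hp hps
    exact hE.1 _ hp hps
  · simp only [mem_map_equiv]
    exact hE.2 _ _ (w.symm.injective.ne hij)

lemma IsTournament.prod_eq [DecidableEq α] {F : Finset (α × α)} (hE : IsTournament E)
    (hF : IsTournament F) {M : Type*} [CommMonoid M] (g : α → α → M)
    (hg : ∀ i j, g i j = g j i) :
    ∏ p ∈ E, g p.1 p.2 = ∏ p ∈ F, g p.1 p.2 := by
  refine prod_nbij' (fun p => if p ∈ F then p else p.swap)
    (fun p => if p ∈ E then p else p.swap) ?_ ?_ ?_ ?_ ?_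
  · intro p hp
    have := hF.swap_mem_of_not_mem (hE.1.fst_ne_snd hp)
    split_ifs <;> simp_all
  · intro p hp
    have := hE.swap_mem_of_not_mem (hF.1.fst_ne_snd hp)
    split_ifs <;> simp_all
  · intro p hp
    have := hE.1 p hp
    split_ifs <;> simp_all
  · intro p hp
    have := hF.1 p hp
    split_ifs <;> simp_all
  · intro p _
    split_ifs
    · rfl
    · exact hg _ _

end Orientation

section LtPairs

variable {n : ℕ}

lemma isTournament_filter_lt : IsTournament ({p | p.1 < p.2} : Finset (Fin n × Fin n)) := by
  refine ⟨fun p hp hps => ?_, fun i j hij => ?_⟩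
  · simp only [mem_filter, mem_univ, true_and, Prod.fst_swap, Prod.snd_swap] at hp hps
    exact lt_asymm hp hps
  · simpa using hij.lt_or_gt

lemma prod_filter_lt {M : Type*} [CommMonoid M] (f : Fin n → Fin n → M) :
    ∏ p ∈ ({p | p.1 < p.2} : Finset (Fin n × Fin n)), f p.1 p.2 =
      ∏ i, ∏ j ∈ Ioi i, f i j := by
  rw [prod_filter, Fintype.prod_prod_type]
  refine prod_congr rfl fun i _ => ?_
  rw [← prod_filter]
  congr 1
  ext j
  simp

lemma IsTournament.prod_eq_prod_Ioi {E : Finset (Fin n × Fin n)} (hE : IsTournament E)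
    {M : Type*} [CommMonoid M] (g : Fin n → Fin n → M) (hg : ∀ i j, g i j = g j i) :
    ∏ p ∈ E, g p.1 p.2 = ∏ i, ∏ j ∈ Ioi i, g i j := by
  rw [hE.prod_eq isTournament_filter_lt g hg, prod_filter_lt]

end LtPairs

section OutDegree

variable {α : Type*} [Fintype α] [DecidableEq α]

def outDeg (E : Finset (α × α)) (i : α) : ℕ := #{j | (i, j) ∈ E}

lemma prod_fst_eq_prod_pow_outDeg (E : Finset (α × α)) {M : Type*} [CommMonoid M]
    (f : α → M) :
    ∏ p ∈ E, f p.1 = ∏ i, f i ^ outDeg E i := by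
  rw [← Fintype.prod_ite_mem, Fintype.prod_prod_type]
  refine prod_congr rfl fun i _ => ?_
  rw [← prod_filter]
  exact prod_const (f i)

lemma IsOriented.outDeg_lt {E : Finset (α × α)} (hE : IsOriented E) (i : α) :
    outDeg E i < Fintype.card α := by
  refine card_lt_univ_of_notMem (x := i) ?_
  rw [mem_filter_univ]
  exact fun h => hE.fst_ne_snd h rfl

end OutDegree

lemma card_filter_perm_apply {α : Type*} [Fintype α] (e : Perm α) (P : α → Prop)
    [DecidablePred P] : #{j | P (e j)} = #{j | P j} :=
  card_equiv e (by simp)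

section LinearExtensions

variable {n : ℕ}

def linearExtensions (E : Finset (Fin n × Fin n)) : Finset (Perm (Fin n)) :=
  {w | ∀ p ∈ E, w p.1 < w p.2}

def signedCount (E : Finset (Fin n × Fin n)) : ℤ :=
  ∑ w ∈ linearExtensions E, (Perm.sign w : ℤ)

variable {E : Finset (Fin n × Fin n)} {w : Perm (Fin n)}

lemma mem_linearExtensions : w ∈ linearExtensions E ↔ ∀ p ∈ E, w p.1 < w p.2 := by
  simp [linearExtensions]

lemma linearExtensions_insert (E : Finset (Fin n × Fin n)) (q : Fin n × Fin n) :
    linearExtensions (insert q E) = {w ∈ linearExtensions E | w q.1 < w q.2} := by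
  ext w
  simp [mem_linearExtensions, and_comm]

lemma signedCount_eq_add (E : Finset (Fin n × Fin n)) {q : Fin n × Fin n} (hq : q.1 ≠ q.2) :
    signedCount E = signedCount (insert q E) + signedCount (insert q.swap E) := by
  rw [signedCount, ← sum_filter_add_sum_filter_not _ (fun w => w q.1 < w q.2), signedCount,
    signedCount, linearExtensions_insert, linearExtensions_insert]
  congr 2
  ext w
  simp [(w.injective.ne hq.symm).le_iff_lt]

lemma IsTournament.mem_iff_lt (hE : IsTournament E) (hw : w ∈ linearExtensions E)
    (i j : Fin n) : (i, j) ∈ E ↔ w i < w j := by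
  refine ⟨fun h => mem_linearExtensions.1 hw _ h, fun h => ?_⟩
  refine (hE.2 i j fun hij => h.ne (by rw [hij])).resolve_right fun hji => ?_
  exact h.asymm (mem_linearExtensions.1 hw _ hji)

lemma IsTournament.outDeg_eq_rev (hE : IsTournament E) (hw : w ∈ linearExtensions E)
    (i : Fin n) : outDeg E i = (w i).rev := by
  simp only [outDeg, hE.mem_iff_lt hw, card_filter_perm_apply w (w i < ·), filter_lt_eq_Ioi,
    Fin.card_Ioi, Fin.val_rev]
  omega

lemma IsTournament.linearExtensions_eq_singleton (hE : IsTournament E)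
    (hw : w ∈ linearExtensions E) : linearExtensions E = {w} := by
  refine eq_singleton_iff_unique_mem.2 ⟨hw, fun v hv => Equiv.ext fun i => ?_⟩
  apply Fin.rev_injective
  exact Fin.ext ((hE.outDeg_eq_rev hv i).symm.trans (hE.outDeg_eq_rev hw i))

lemma IsTournament.mem_iff_of_outDeg_eq (hE : IsTournament E) {e : Perm (Fin n)}
    (he : ∀ i, outDeg E i = e i) (i j : Fin n) : (i, j) ∈ E ↔ e j < e i := by
  obtain ⟨k, rfl⟩ := e.symm.surjective i
  rw [apply_symm_apply]
  revert j
  -- Every vertex of smaller out-degree beats only vertices of still smaller out-degree, so it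
  -- loses to `e.symm k`; these are already `k` wins of `e.symm k`, i.e. all of them.
  induction k using WellFoundedLT.induction with
  | _ k ih =>
  have hsub : ({j | e j < k} : Finset (Fin n)) ⊆
      ({j | (e.symm k, j) ∈ E} : Finset (Fin n)) := by
    intro j hj
    rw [mem_filter_univ] at hj ⊢
    have hji : (j, e.symm k) ∉ E := by
      simpa [ih (e j) hj, hj.asymm] using ih (e j) hj (e.symm k)
    exact (hE.2 _ _ fun h => hj.ne (by rw [← h, apply_symm_apply])).resolve_right hji
  have hcard : #{j | (e.symm k, j) ∈ E} = #({j | e j < k} : Finset (Fin n)) := by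
    rw [← outDeg, he, apply_symm_apply, card_filter_perm_apply e (· < k), filter_gt_eq_Iio,
      Fin.card_Iio]
  intro j
  rw [← mem_filter_univ (p := fun j => e j < k), eq_of_subset_of_card_le hsub hcard.le,
    mem_filter_univ]

lemma IsTournament.linearExtensions_nonempty (hE : IsTournament E)
    (hd : Function.Injective (outDeg E)) : (linearExtensions E).Nonempty := by
  let d : Fin n → Fin n := fun i => ⟨outDeg E i, by simpa using hE.1.outDeg_lt i⟩
  have hd' : Function.Injective d := fun i j h => hd (congrArg Fin.val h)
  let e : Perm (Fin n) := Equiv.ofBijective d (Finite.injective_iff_bijective.1 hd')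
  refine ⟨e.trans Fin.revPerm, mem_linearExtensions.2 fun p hp => ?_⟩
  simpa using (hE.mem_iff_of_outDeg_eq (e := e) (fun _ => rfl) p.1 p.2).1 hp

end LinearExtensions

section Alternant

variable {n : ℕ} {E : Finset (Fin n × Fin n)}

lemma IsTournament.signedCount_mul_prod_sub (hE : IsTournament E) {R : Type*} [CommRing R]
    (x : Fin n → R) :
    (signedCount E : R) * ∏ i, ∏ j ∈ Ioi i, (x i - x j) =
      (Matrix.of fun i j => x i ^ outDeg E j).det := by
  obtain ⟨w, hw⟩ | hempty := (linearExtensions E).eq_empty_or_nonempty.symm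
  · have hM : Matrix.of (fun i j => x i ^ outDeg E j) =
        (Matrix.projVandermonde 1 x).submatrix id w := by
      ext i j
      simp [Matrix.projVandermonde_apply, hE.outDeg_eq_rev hw]
    rw [hM, Matrix.det_permute', Matrix.det_projVandermonde, signedCount,
      hE.linearExtensions_eq_singleton hw, sum_singleton]
    simp
  · have hd : ¬ Function.Injective (outDeg E) :=
      fun hd => (hE.linearExtensions_nonempty hd).ne_empty hempty
    obtain ⟨i, j, hij, hne⟩ := Function.not_injective_iff.1 hd
    rw [signedCount, hempty, sum_empty, Int.cast_zero, zero_mul,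
      Matrix.det_zero_of_column_eq hne fun k => by simp [hij]]

end Alternant

lemma inv_one_add_div {K : Type*} [Field K] {a : K} (b : K) (ha : a ≠ 0) :
    (1 + b / a)⁻¹ = a / (a + b) := by
  rw [one_add_div ha, inv_div]

section Weights

variable {n : ℕ} {K : Type*} [Field K] (x : Fin n → K)

def signedWeight (E : Finset (Fin n × Fin n)) : K :=
  ∑ w : Perm (Fin n), ((Perm.sign w : ℤ) : K) * ∏ p ∈ E, (1 + x (w p.2) / x (w p.1))⁻¹

variable {x}

lemma signedWeight_eq_add (hx0 : ∀ i, x i ≠ 0) (hxx : ∀ i j, i ≠ j → x i + x j ≠ 0)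
    {E : Finset (Fin n × Fin n)} {q : Fin n × Fin n} (hq : q.1 ≠ q.2) (hqE : q ∉ E)
    (hqsE : q.swap ∉ E) :
    signedWeight x E = signedWeight x (insert q E) + signedWeight x (insert q.swap E) := by
  simp only [signedWeight, ← sum_add_distrib, ← mul_add]
  refine sum_congr rfl fun w _ => ?_
  have hsum : (1 + x (w q.2) / x (w q.1))⁻¹ + (1 + x (w q.1) / x (w q.2))⁻¹ = 1 := by
    rw [inv_one_add_div _ (hx0 _), inv_one_add_div _ (hx0 _), add_comm (x (w q.2)),
      ← add_div, div_self (hxx _ _ (w.injective.ne hq))]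
  rw [prod_insert hqE, prod_insert hqsE, ← add_mul, Prod.fst_swap, Prod.snd_swap, hsum, one_mul]

lemma IsTournament.signedWeight_eq_det_div (hx0 : ∀ i, x i ≠ 0) {E : Finset (Fin n × Fin n)}
    (hE : IsTournament E) :
    signedWeight x E =
      (Matrix.of fun i j => x i ^ outDeg E j).det / ∏ i, ∏ j ∈ Ioi i, (x i + x j) := by
  rw [signedWeight, Matrix.det_apply', sum_div]
  refine sum_congr rfl fun w _ => ?_
  have hden : ∏ p ∈ E, (x (w p.1) + x (w p.2)) = ∏ i, ∏ j ∈ Ioi i, (x i + x j) := by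
    rw [← (hE.map w).prod_eq_prod_Ioi (fun i j => x i + x j) fun i j => add_comm _ _, prod_map]
    rfl
  rw [prod_congr rfl fun p _ => inv_one_add_div _ (hx0 _), prod_div_distrib, hden,
    prod_fst_eq_prod_pow_outDeg E fun i => x (w i), mul_div_assoc]
  rfl

lemma prod_one_sub_div_div_one_add_div (hx0 : ∀ i, x i ≠ 0) :
    ∏ i, ∏ j ∈ Ioi i, (1 - x j / x i) / (1 + x j / x i) =
      (∏ i, ∏ j ∈ Ioi i, (x i - x j)) / ∏ i, ∏ j ∈ Ioi i, (x i + x j) := by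
  simp only [← prod_div_distrib]
  refine prod_congr rfl fun i _ => prod_congr rfl fun j _ => ?_
  rw [one_sub_div (hx0 i), one_add_div (hx0 i), div_div_div_cancel_right₀ (hx0 i)]

theorem IsOriented.signedCount_mul_eq_signedWeight (hx0 : ∀ i, x i ≠ 0)
    (hxx : ∀ i j, i ≠ j → x i + x j ≠ 0) {E : Finset (Fin n × Fin n)} (hE : IsOriented E) :
    (signedCount E : K) * ∏ i, ∏ j ∈ Ioi i, (1 - x j / x i) / (1 + x j / x i) =
      signedWeight x E := by
  by_cases hT : IsTournament E
  · rw [prod_one_sub_div_div_one_add_div hx0, ← mul_div_assoc, hT.signedCount_mul_prod_sub,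
      hT.signedWeight_eq_det_div hx0]
  · obtain ⟨i, j, hij, hijE, hjiE⟩ : ∃ i j, i ≠ j ∧ (i, j) ∉ E ∧ (j, i) ∉ E := by
      simpa [IsTournament, hE, not_or] using hT
    have h₁ := IsOriented.signedCount_mul_eq_signedWeight hx0 hxx
      (hE.insert (q := (i, j)) hij hjiE)
    have h₂ := IsOriented.signedCount_mul_eq_signedWeight hx0 hxx
      (hE.insert (q := (i, j).swap) hij.symm hijE)
    rw [signedCount_eq_add E (q := (i, j)) hij, signedWeight_eq_add hx0 hxx hij hijE hjiE,
      Int.cast_add, add_mul, h₁, h₂]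
termination_by #Eᶜ
decreasing_by all_goals exact card_lt_card (compl_ssubset_compl.2 (ssubset_insert ‹_›))

end Weights

theorem Qn_denominator_identity_general (n : ℕ)
    (K : Type*) [Field K] [Algebra (MvPolynomial (Fin n) ℚ) K]
    [IsFractionRing (MvPolynomial (Fin n) ℚ) K]
    (x : Fin n → K)
    (hx : ∀ i, x i = algebraMap (MvPolynomial (Fin n) ℚ) K (MvPolynomial.X i))
    (S : Finset (Fin n × Fin n)) (hS : ∀ p ∈ S, p.1 < p.2) :
    ((∑ w ∈ Finset.univ.filter
        (fun w : Equiv.Perm (Fin n) => ∀ p ∈ S, w p.1 < w p.2),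
        (Equiv.Perm.sign w : ℤ) : ℤ) : K) *
      ∏ i : Fin n, ∏ j ∈ Finset.Ioi i, ((1 - x j / x i) / (1 + x j / x i)) =
    ∑ w : Equiv.Perm (Fin n),
      ((Equiv.Perm.sign w : ℤ) : K) *
        ∏ p ∈ S, (1 + x (w p.2) / x (w p.1))⁻¹ := by
  have hinj := IsFractionRing.injective (MvPolynomial (Fin n) ℚ) K
  have hx0 : ∀ i, x i ≠ 0 := fun i => by
    rw [hx, map_ne_zero_iff _ hinj]
    exact MvPolynomial.X_ne_zero i
  have hxx : ∀ i j, i ≠ j → x i + x j ≠ 0 := fun i j _ => by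
    rw [hx, hx, ← map_add, map_ne_zero_iff _ hinj]
    intro h
    simpa using congrArg (MvPolynomial.eval 1) h
  have hS' : IsOriented S := fun p hp hps => (hS p hp).asymm (hS _ hps)
  exact hS'.signedCount_mul_eq_signedWeight hx0 hxx

/-- The denominator identity for the queer Lie superalgebra `Q(n)`:
for any set `S` of pairs `(i,j)` with `i < j`, with
`A(S) = {w ∈ S_n : w(i) < w(j) for all (i,j) ∈ S}` and
`a(S) = Σ_{w ∈ A(S)} sgn(w)`, one has
`a(S)·R = Σ_{w∈S_n} sgn(w)·∏_{(i,j)∈S}(1 + x_{w(j)}/x_{w(i)})⁻¹`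
in `ℚ(x₁,…,x_n)`. -/
theorem Qn_denominator_identity (n : ℕ) (hn : 1 ≤ n)
    (K : Type*) [Field K] [Algebra (MvPolynomial (Fin n) ℚ) K]
    [IsFractionRing (MvPolynomial (Fin n) ℚ) K]
    (x : Fin n → K)
    (hx : ∀ i, x i = algebraMap (MvPolynomial (Fin n) ℚ) K (MvPolynomial.X i))
    (S : Finset (Fin n × Fin n)) (hS : ∀ p ∈ S, p.1 < p.2) :
    ((∑ w ∈ Finset.univ.filter
        (fun w : Equiv.Perm (Fin n) => ∀ p ∈ S, w p.1 < w p.2),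
        (Equiv.Perm.sign w : ℤ) : ℤ) : K) *
      ∏ i : Fin n, ∏ j ∈ Finset.Ioi i, ((1 - x j / x i) / (1 + x j / x i)) =
    ∑ w : Equiv.Perm (Fin n),
      ((Equiv.Perm.sign w : ℤ) : K) *
        ∏ p ∈ S, (1 + x (w p.2) / x (w p.1))⁻¹ :=
  Qn_denominator_identity_general n K x hx S hS
end

section
/- Let n ≥ 1, let k = ⌊n/2⌋, and let A := {σ ∈ S_n : σ(i) > σ(n+1−i) for every integer i with 1 ≤ i and 2i ≤ n}. Then Σ_{σ∈A} sgn(σ) = k! if n is odd, and Σ_{σ∈A} sgn(σ) = (−1)^{n/2}·(n/2)! if n is even. -/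
/-!
Every `σ ∈ S_(m+2)` is uniquely `consPerm a (snocPerm c τ)`: `σ 0 = a`, `σ (m+1) = a.succAbove c`,
and the middle positions carry `τ ∈ S_m` relabelled by the increasing map
`a.succAbove ∘ c.succAbove`. The sign is `(-1)^a (-1)^(m-c) sgn τ`, and the mirror condition on
`σ` becomes `c < a` together with the mirror condition on `τ`. Summing the weights over `c < a`
gives `(-1)^(m+1) ⌊(m+2)/2⌋`, so the signed count satisfies
`S(m+2) = (-1)^(m+1) ⌊(m+2)/2⌋ S(m)` with `S(0) = S(1) = 1`.
-/

open Equiv Equiv.Perm Finset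

def consPerm {n : ℕ} (a : Fin (n + 1)) (τ : Perm (Fin n)) : Perm (Fin (n + 1)) :=
  a.cycleRange.symm * decomposeFin.symm (0, τ)

section consPerm

variable {n : ℕ} (a : Fin (n + 1)) (τ : Perm (Fin n))

@[simp] lemma consPerm_zero : consPerm a τ 0 = a := by
  simp [consPerm, Fin.cycleRange_symm_zero]

@[simp] lemma consPerm_succ (x : Fin n) : consPerm a τ x.succ = a.succAbove (τ x) := by
  simp [consPerm, Fin.cycleRange_symm_succ]

lemma sign_consPerm : sign (consPerm a τ) = (-1) ^ (a : ℕ) * sign τ := by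
  simp [consPerm, Fin.sign_cycleRange]

end consPerm

lemma consPerm_bijective {n : ℕ} :
    Function.Bijective (fun p : Fin (n + 1) × Perm (Fin n) => consPerm p.1 p.2) := by
  refine (Fintype.bijective_iff_injective_and_card _).2 ⟨?_, ?_⟩
  · rintro ⟨a, τ⟩ ⟨a', τ'⟩ h
    have ha : a = a' := by simpa using DFunLike.congr_fun h 0
    subst ha
    refine Prod.ext rfl (Equiv.ext fun x => a.succAbove_right_injective ?_)
    simpa using DFunLike.congr_fun h x.succ
  · simp only [Fintype.card_prod, Fintype.card_fin, Fintype.card_perm, Nat.factorial_succ]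

lemma sum_perm_fin_succ {M : Type*} [AddCommMonoid M] {n : ℕ} (f : Perm (Fin (n + 1)) → M) :
    ∑ σ, f σ = ∑ a, ∑ τ, f (consPerm a τ) := by
  rw [← Fintype.sum_prod_type']
  exact (Fintype.sum_bijective _ consPerm_bijective _ _ fun _ => rfl).symm

def snocPerm {n : ℕ} (c : Fin (n + 1)) (τ : Perm (Fin n)) : Perm (Fin (n + 1)) :=
  Fin.revPerm.permCongr (consPerm c.rev (Fin.revPerm.permCongr τ))

section snocPerm

variable {n : ℕ} (c : Fin (n + 1)) (τ : Perm (Fin n))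

@[simp] lemma snocPerm_last : snocPerm c τ (Fin.last n) = c := by
  simp only [snocPerm, permCongr_apply, Fin.revPerm_symm, Fin.revPerm_apply, Fin.rev_last,
    consPerm_zero, Fin.rev_rev]

@[simp] lemma snocPerm_castSucc (y : Fin n) :
    snocPerm c τ y.castSucc = c.succAbove (τ y) := by
  simp only [snocPerm, permCongr_apply, Fin.revPerm_symm, Fin.revPerm_apply, Fin.rev_castSucc,
    consPerm_succ, Fin.rev_succAbove, Fin.rev_rev]

lemma sign_snocPerm : sign (snocPerm c τ) = (-1) ^ (c.rev : ℕ) * sign τ := by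
  rw [snocPerm, sign_permCongr, sign_consPerm, sign_permCongr]

end snocPerm

lemma sum_perm_fin_succ_last {M : Type*} [AddCommMonoid M] {n : ℕ}
    (f : Perm (Fin (n + 1)) → M) :
    ∑ σ, f σ = ∑ c, ∑ τ, f (snocPerm c τ) := by
  calc ∑ σ, f σ
      = ∑ c, ∑ τ, f (Fin.revPerm.permCongr (consPerm c τ)) := by
        rw [← Equiv.sum_comp Fin.revPerm.permCongr, sum_perm_fin_succ]
    _ = ∑ c, ∑ τ, f (snocPerm c τ) := by
        rw [← Equiv.sum_comp Fin.revPerm]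
        refine Finset.sum_congr rfl fun c _ => ?_
        rw [← Equiv.sum_comp Fin.revPerm.permCongr]
        simp [snocPerm]

def MirrorDescending {α : Type*} [LT α] {n : ℕ} (f : Fin n → α) : Prop :=
  ∀ i : Fin n, 2 * ((i : ℕ) + 1) ≤ n → f i.rev < f i

instance {α : Type*} [LT α] [DecidableLT α] {n : ℕ} (f : Fin n → α) :
    Decidable (MirrorDescending f) :=
  inferInstanceAs (Decidable (∀ _ : Fin n, _ → _))

lemma StrictMono.mirrorDescending_comp_iff {α β : Type*} [LinearOrder α] [Preorder β]
    {g : α → β} (hg : StrictMono g) {n : ℕ} {f : Fin n → α} : MirrorDescending (g ∘ f) ↔ MirrorDescending f :=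
  forall₂_congr fun _ _ => hg.lt_iff_lt

lemma mirrorDescending_succ_succ_iff {α : Type*} [LT α] {m : ℕ} (f : Fin (m + 2) → α) :
    MirrorDescending f ↔
      f (Fin.last (m + 1)) < f 0 ∧ MirrorDescending fun j : Fin m => f j.castSucc.succ := by
  have hrev (j : Fin m) : j.castSucc.succ.rev = j.rev.castSucc.succ := by
    rw [Fin.rev_succ, Fin.rev_castSucc, Fin.succ_castSucc]
  constructor
  · intro h
    refine ⟨by simpa using h 0 (by simp), fun j hj => ?_⟩
    simpa [hrev] using h j.castSucc.succ (by simp; omega)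
  · rintro ⟨h0, h⟩ i hi
    induction i using Fin.cases with
    | zero => simpa using h0
    | succ i =>
      induction i using Fin.lastCases with
      | last => simp at hi
      | cast j => simpa [hrev] using h j (by simp at hi; omega)

lemma mirrorDescending_consPerm_snocPerm_iff {m : ℕ} (a : Fin (m + 2)) (c : Fin (m + 1))
    (τ : Perm (Fin m)) :
    MirrorDescending ⇑(consPerm a (snocPerm c τ)) ↔ c.castSucc < a ∧ MirrorDescending ⇑τ := by
  have hmid : (fun j : Fin m => consPerm a (snocPerm c τ) j.castSucc.succ) =
      (a.succAbove ∘ c.succAbove) ∘ τ := by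
    ext j; simp
  rw [mirrorDescending_succ_succ_iff, hmid,
    ((Fin.strictMono_succAbove a).comp (Fin.strictMono_succAbove c)).mirrorDescending_comp_iff,
    ← Fin.succ_last, consPerm_succ, snocPerm_last, consPerm_zero, Fin.succAbove_lt_iff_castSucc_lt]

def signedMirrorCount (n : ℕ) : ℤ :=
  ∑ σ : Perm (Fin n), if MirrorDescending ⇑σ then (sign σ : ℤ) else 0

def mirrorWeight (m : ℕ) : ℤ :=
  ∑ a : Fin (m + 2), ∑ c : Fin (m + 1),
    if c.castSucc < a then (-1 : ℤ) ^ (a : ℕ) * (-1) ^ (c.rev : ℕ) else 0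

lemma signedMirrorCount_add_two (m : ℕ) :
    signedMirrorCount (m + 2) = mirrorWeight m * signedMirrorCount m := by
  have hsummand (a : Fin (m + 2)) (c : Fin (m + 1)) (τ : Perm (Fin m)) :
      (if MirrorDescending ⇑(consPerm a (snocPerm c τ)) then
        (sign (consPerm a (snocPerm c τ)) : ℤ) else 0) =
      (if c.castSucc < a then (-1 : ℤ) ^ (a : ℕ) * (-1) ^ (c.rev : ℕ) else 0) *
        if MirrorDescending ⇑τ then (sign τ : ℤ) else 0 := by
    rw [ite_zero_mul_ite_zero]
    refine if_congr (mirrorDescending_consPerm_snocPerm_iff a c τ) ?_ rfl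
    rw [sign_consPerm, sign_snocPerm]
    push_cast
    ring
  rw [signedMirrorCount, signedMirrorCount, mirrorWeight, sum_perm_fin_succ]
  simp only [sum_perm_fin_succ_last, hsummand, ← Finset.mul_sum, Finset.sum_mul]

lemma neg_one_pow_rev {m : ℕ} (c : Fin (m + 1)) :
    (-1 : ℤ) ^ (c.rev : ℕ) = (-1) ^ m * (-1) ^ (c : ℕ) := by
  have hsum : (c.rev : ℕ) + c = m := by rw [Fin.val_rev]; omega
  have hm : (-1 : ℤ) ^ m = (-1) ^ (c.rev : ℕ) * (-1) ^ (c : ℕ) := by rw [← pow_add, hsum]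
  rw [hm, mul_assoc, ← pow_add, ← two_mul, pow_mul]
  norm_num

lemma sum_range_ite_even (t : ℕ) :
    ∑ a ∈ range t, (if Even a then 0 else 1 : ℤ) = (t / 2 : ℕ) := by
  induction t with
  | zero => simp
  | succ t ih =>
    rw [Finset.sum_range_succ, ih]
    rcases Nat.even_or_odd t with ht | ht
    · rw [if_pos ht, show (t + 1) / 2 = t / 2 by rcases ht with ⟨k, rfl⟩; omega, add_zero]
    · rw [if_neg (Nat.not_even_iff_odd.2 ht), show (t + 1) / 2 = t / 2 + 1 by
        rcases ht with ⟨k, rfl⟩; omega]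
      push_cast
      ring

lemma mirrorWeight_eq (m : ℕ) : mirrorWeight m = (-1) ^ (m + 1) * ((m + 2) / 2 : ℕ) := by
  have hinner (a : ℕ) (ha : a ≤ m + 1) :
      ∑ c : Fin (m + 1), (if (c : ℕ) < a then (-1 : ℤ) ^ a * (-1) ^ (c : ℕ) else 0) =
        -if Even a then 0 else 1 := by
    rw [Fin.sum_univ_eq_sum_range (fun c => if c < a then (-1 : ℤ) ^ a * (-1) ^ c else 0),
      ← sum_filter, show (range (m + 1)).filter (· < a) = range a by ext; simp; omega,
      ← mul_sum, neg_one_geom_sum]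
    split_ifs with h
    · simp
    · simp [(Nat.not_even_iff_odd.1 h).neg_one_pow]
  calc mirrorWeight m
      = (-1) ^ m * ∑ a : Fin (m + 2), ∑ c : Fin (m + 1),
          if (c : ℕ) < a then (-1 : ℤ) ^ (a : ℕ) * (-1) ^ (c : ℕ) else 0 := by
        simp only [mirrorWeight, mul_sum, Fin.lt_def, Fin.val_castSucc, neg_one_pow_rev]
        refine sum_congr rfl fun a _ => sum_congr rfl fun c _ => ?_
        split_ifs <;> ring
    _ = (-1) ^ m * ∑ a ∈ range (m + 2), -if Even a then 0 else 1 := by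
        rw [← Fin.sum_univ_eq_sum_range (fun a => -if Even a then (0 : ℤ) else 1)]
        congr 1
        exact sum_congr rfl fun a _ => hinner a (Nat.lt_succ_iff.1 a.isLt)
    _ = (-1) ^ (m + 1) * ((m + 2) / 2 : ℕ) := by
        rw [sum_neg_distrib, sum_range_ite_even, pow_succ]
        ring

theorem signedMirrorCount_eq : ∀ n : ℕ, signedMirrorCount n =
    if n % 2 = 1 then ((n / 2).factorial : ℤ) else (-1) ^ (n / 2) * ((n / 2).factorial : ℤ)
  | 0 => by decide
  | 1 => by decide
  | m + 2 => by
    rw [signedMirrorCount_add_two, mirrorWeight_eq, signedMirrorCount_eq m,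
      show (m + 2) / 2 = m / 2 + 1 by omega, Nat.factorial_succ, Nat.add_mod_right]
    rcases Nat.mod_two_eq_zero_or_one m with hm | hm
    · have hodd : Odd (m + 1) := by rw [Nat.odd_iff]; omega
      simp only [hm, hodd.neg_one_pow]
      push_cast
      ring
    · have heven : Even (m + 1) := by rw [Nat.even_iff]; omega
      simp only [hm, heven.neg_one_pow]
      push_cast
      ring

/-- The signed count of permutations `σ ∈ S_n` with `σ(i) > σ(n+1−i)` for all
`1 ≤ i` with `2i ≤ n` equals `⌊n/2⌋!` for odd `n`, and `(−1)^{n/2}·(n/2)!`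
for even `n`.  (Positions are `1`-indexed; here `i` runs over `Fin n`, with
`i+1` the corresponding `1`-indexed position.) -/
theorem signed_count_lemQ (n : ℕ) :
    (∑ σ ∈ Finset.univ.filter (fun σ : Equiv.Perm (Fin n) =>
        ∀ i : Fin n, 2 * ((i : ℕ) + 1) ≤ n →
          σ ⟨n - 1 - (i : ℕ), by omega⟩ < σ i),
      (Equiv.Perm.sign σ : ℤ)) =
    if n % 2 = 1 then ((n / 2).factorial : ℤ)
    else (-1) ^ (n / 2) * ((n / 2).factorial : ℤ) := by
  have hrev (i : Fin n) : (⟨n - 1 - (i : ℕ), by omega⟩ : Fin n) = i.rev :=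
    Fin.ext (by rw [Fin.val_rev, Fin.val_mk]; omega)
  simp only [hrev]
  rw [← signedMirrorCount_eq, signedMirrorCount, sum_filter]
  rfl
end

section
/- Let n ≥ 2 and let S be a subset of {(i,j) : 1 ≤ i < j ≤ n} with |S| < ⌊n/2⌋. Set A(S) := {w ∈ S_n : w(i) < w(j) for all (i,j) ∈ S}. Then Σ_{w∈A(S)} sgn(w) = 0. -/
/-!
Fewer than `⌊n/2⌋` pairs involve at most `2|S| ≤ n - 2` indices, so two indices `a ≠ b` occur in
no pair of `S`. Right multiplication by the transposition `(a b)` does not change the values of `w`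
at the indices of `S`, so it is an involution of `A(S)` without fixed points that reverses the
sign, and the signs cancel in pairs.
-/

open Equiv Finset

variable {α : Type*} [DecidableEq α]

namespace Finset

def endpoints (S : Finset (α × α)) : Finset α := S.image Prod.fst ∪ S.image Prod.snd

theorem fst_mem_endpoints {S : Finset (α × α)} {p : α × α} (hp : p ∈ S) : p.1 ∈ S.endpoints :=
  mem_union_left _ (mem_image_of_mem _ hp)

theorem snd_mem_endpoints {S : Finset (α × α)} {p : α × α} (hp : p ∈ S) : p.2 ∈ S.endpoints :=
  mem_union_right _ (mem_image_of_mem _ hp)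

theorem card_endpoints_le (S : Finset (α × α)) : S.endpoints.card ≤ 2 * S.card :=
  calc S.endpoints.card ≤ (S.image Prod.fst).card + (S.image Prod.snd).card := card_union_le _ _
    _ ≤ S.card + S.card := add_le_add card_image_le card_image_le
    _ = 2 * S.card := (two_mul _).symm

theorem exists_ne_notMem_of_card_add_two_le [Fintype α] {V : Finset α}
    (hV : V.card + 2 ≤ Fintype.card α) : ∃ a b, a ≠ b ∧ a ∉ V ∧ b ∉ V := by
  have hcompl : 1 < Vᶜ.card := by rw [card_compl]; omega
  obtain ⟨a, ha, b, hb, hab⟩ := one_lt_card.mp hcompl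
  exact ⟨a, b, hab, mem_compl.mp ha, mem_compl.mp hb⟩

end Finset

theorem Equiv.Perm.sum_sign_eq_zero_of_mul_swap_mem [Fintype α] {A : Finset (Perm α)} {a b : α}
    (hab : a ≠ b) (hA : ∀ w ∈ A, w * swap a b ∈ A) : ∑ w ∈ A, (Perm.sign w : ℤ) = 0 :=
  sum_involution (fun w _ => w * swap a b)
    (fun w _ => by simp [Perm.sign_swap hab])
    (fun w _ _ h => hab <| swap_eq_one_iff.mp <| mul_eq_left.mp h)
    hA (fun w _ => by simp [mul_assoc])

theorem Equiv.Perm.mul_swap_lt_of_notMem_endpoints [LinearOrder α] {S : Finset (α × α)}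
    {a b : α} (ha : a ∉ S.endpoints) (hb : b ∉ S.endpoints) {w : Perm α}
    (hw : ∀ p ∈ S, w p.1 < w p.2) : ∀ p ∈ S, (w * swap a b) p.1 < (w * swap a b) p.2 := by
  have hfix : ∀ x ∈ S.endpoints, (w * swap a b) x = w x := fun x hx =>
    congrArg w (swap_apply_of_ne_of_ne (ne_of_mem_of_not_mem hx ha) (ne_of_mem_of_not_mem hx hb))
  intro p hp
  rw [hfix _ (fst_mem_endpoints hp), hfix _ (snd_mem_endpoints hp)]
  exact hw p hp

theorem signed_count_small_S_general (n : ℕ)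
    (S : Finset (Fin n × Fin n))
    (hcard : S.card < n / 2) :
    (∑ w ∈ Finset.univ.filter
        (fun w : Equiv.Perm (Fin n) => ∀ p ∈ S, w p.1 < w p.2),
      (Equiv.Perm.sign w : ℤ)) = 0 := by
  have hroom : S.endpoints.card + 2 ≤ Fintype.card (Fin n) := by
    have := S.card_endpoints_le
    rw [Fintype.card_fin]
    omega
  obtain ⟨a, b, hab, ha, hb⟩ := exists_ne_notMem_of_card_add_two_le hroom
  refine Perm.sum_sign_eq_zero_of_mul_swap_mem hab fun w hw => ?_
  simp only [mem_filter, mem_univ, true_and] at hw ⊢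
  exact Perm.mul_swap_lt_of_notMem_endpoints ha hb hw

/-- If `S` is a set of pairs `(i,j)`, `i < j`, in `{1,…,n}` with
`|S| < ⌊n/2⌋`, then `a(S) = Σ_{w ∈ A(S)} sgn(w) = 0`, where
`A(S) = {w ∈ S_n : w(i) < w(j) for all (i,j) ∈ S}`. -/
theorem signed_count_small_S (n : ℕ) (hn : 2 ≤ n)
    (S : Finset (Fin n × Fin n)) (hS : ∀ p ∈ S, p.1 < p.2)
    (hcard : S.card < n / 2) :
    (∑ w ∈ Finset.univ.filter
        (fun w : Equiv.Perm (Fin n) => ∀ p ∈ S, w p.1 < w p.2),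
      (Equiv.Perm.sign w : ℤ)) = 0 :=
  signed_count_small_S_general n S hcard
end

section
/- Let m > n ≥ 1 be integers. In V = ℝ^{m+n}, with standard basis vectors denoted ε_1,…,ε_m,δ_1,…,δ_n, let W = S_m × S_n act by permuting the ε-coordinates and the δ-coordinates separately, let ρ_0 := Σ_{i=1}^m ((m+1−2i)/2)ε_i + Σ_{j=1}^n ((n+1−2j)/2)δ_j, let Π := {ε_1−δ_1, δ_1−ε_2, ε_2−δ_2, …, ε_n−δ_n, δ_n−ε_{n+1}, ε_{n+1}−ε_{n+2}, …, ε_{m−1}−ε_m}, and let Q^+ be the set of linear combinations of elements of Π with nonnegative integer coefficients. If λ ∈ V has trivial stabilizer in W and the whole orbit Wλ is contained in ρ_0 − Q^+, then λ ∈ Wρ_0. -/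
/-- The action of `(σ,τ) ∈ S_m × S_n` on `ℝ^{m+n}` permuting the `ε`- and the
`δ`-coordinates separately (so that `ε_i ↦ ε_{σ(i)}`, `δ_j ↦ δ_{τ(j)}`). -/
def glAct (m n : ℕ) (σ : Equiv.Perm (Fin m)) (τ : Equiv.Perm (Fin n))
    (f : Fin m ⊕ Fin n → ℝ) : Fin m ⊕ Fin n → ℝ :=
  fun z => f (Sum.map (⇑σ.symm) (⇑τ.symm) z)

/-- `ρ₀ = Σ_i ((m+1−2i)/2)ε_i + Σ_j ((n+1−2j)/2)δ_j` for `gl(m|n)`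
(`1`-indexed; here coordinates are `0`-indexed). -/
noncomputable def glRho (m n : ℕ) : Fin m ⊕ Fin n → ℝ :=
  Sum.elim (fun i => ((m : ℝ) - 1 - 2 * (i : ℕ)) / 2)
    (fun j => ((n : ℝ) - 1 - 2 * (j : ℕ)) / 2)

/-- The simple roots `Π = {ε_1−δ_1, δ_1−ε_2, ε_2−δ_2, …, ε_n−δ_n, δ_n−ε_{n+1},
ε_{n+1}−ε_{n+2}, …, ε_{m−1}−ε_m}` of `gl(m|n)` (written `0`-indexed). -/
noncomputable def glSimple (m n : ℕ) : Set (Fin m ⊕ Fin n → ℝ) :=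
  {v | (∃ i : Fin n, ∃ hi : (i : ℕ) < m,
          v = Pi.single (Sum.inl ⟨(i : ℕ), hi⟩) 1 - Pi.single (Sum.inr i) 1) ∨
       (∃ i : Fin n, ∃ hi : (i : ℕ) + 1 < m,
          v = Pi.single (Sum.inr i) 1 - Pi.single (Sum.inl ⟨(i : ℕ) + 1, hi⟩) 1) ∨
       (∃ i : Fin m, ∃ hi : (i : ℕ) + 1 < m, n ≤ (i : ℕ) ∧
          v = Pi.single (Sum.inl i) 1 - Pi.single (Sum.inl ⟨(i : ℕ) + 1, hi⟩) 1)}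

/-!
Write `x i = (m - 1)/2 - λ(ε_i)` and `y j = (n - 1)/2 - λ(δ_j)`, so that `ρ₀` itself has
`x = (0, 1, …, m - 1)` and `y = (0, 1, …, n - 1)`. For `q ∈ Q⁺` the coordinate sum is `0`, and
the partial sums of `q` over the initial segments `{ε₁}` and `{ε₁, δ₁}` of the order
`ε₁ < δ₁ < ε₂ < δ₂ < …` are natural numbers, since every simple root is `e_a - e_b` with `b` the
successor of `a`. Applied to `ρ₀ - wλ` for suitable `w ∈ W`, this makes every `x i` and every
`x i + y j` a natural number and gives `∑ x + ∑ y = ∑_{t<m} t + ∑_{t<n} t`; regularity makes the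
`x i`, and the `y j`, pairwise distinct. With `μ = min x`, the distinct integers `x i ≥ μ` and
`y j ≥ -μ` have sums at least `∑_{t<m} t + m μ` and `∑_{t<n} t - n μ`, so `(m - n) μ ≤ 0`. Hence
`μ = 0` and both bounds are attained, which forces `x` and `y` to be permutations of
`0, …, m - 1` and `0, …, n - 1`.
-/

open Finset

namespace Finset

lemma lt_of_sum_le_sum_range {s : Finset ℤ} {c : ℤ} (hs : ∀ x ∈ s, c ≤ x)
    (h : ∑ x ∈ s, x ≤ ∑ t ∈ range #s, (c + t)) : ∀ x ∈ s, x < c + #s := by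
  intro x hx
  by_contra! hle
  have hcard : #(s.erase x) + 1 = #s := card_erase_add_one hx
  have herase := sum_range_le_sum (s := s.erase x) fun y hy => hs y (mem_of_mem_erase hy)
  rw [← sum_erase_add s _ hx, ← hcard, sum_range_succ] at h
  linarith

end Finset

section
variable {k : ℕ} {g : Fin k → ℤ} {c : ℤ}

lemma sum_range_le_sum_of_injective (hg : Function.Injective g) (hc : ∀ i, c ≤ g i) :
    ∑ t ∈ range k, (c + t) ≤ ∑ i, g i := by
  have := sum_range_le_sum (s := univ.image g) (c := c) (by simpa using hc)
  rwa [card_image_of_injective _ hg, card_univ, Fintype.card_fin,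
    sum_image fun i _ j _ h => hg h] at this

lemma exists_perm_of_sum_le_sum_range (hg : Function.Injective g) (hc : ∀ i, c ≤ g i)
    (h : ∑ i, g i ≤ ∑ t ∈ range k, (c + t)) :
    ∃ σ : Equiv.Perm (Fin k), ∀ i, g i = c + σ i := by
  have hlt : ∀ i, g i < c + k := by
    have := lt_of_sum_le_sum_range (s := univ.image g) (c := c) (by simpa using hc)
    rw [card_image_of_injective _ hg, card_univ, Fintype.card_fin,
      sum_image fun i _ j _ h => hg h] at this
    simpa using this h
  let f : Fin k → Fin k := fun i => ⟨(g i - c).toNat, by have := hlt i; have := hc i; omega⟩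
  have hf : Function.Injective f := fun i j hij => hg (by
    have := hc i; have := hc j; simp only [f, Fin.ext_iff] at hij; omega)
  exact ⟨Equiv.ofBijective f (Finite.injective_iff_bijective.mp hf), fun i => by
    have := hc i; simp [f]; omega⟩
end

lemma exists_perms_of_sum_eq {m n : ℕ} (hmn : n < m) {c : Fin m → ℤ} {e : Fin n → ℤ}
    (hc : Function.Injective c) (he : Function.Injective e) (hc₀ : ∀ i, 0 ≤ c i)
    (hce : ∀ i j, 0 ≤ c i + e j)
    (hsum : ∑ i, c i + ∑ j, e j = ∑ t ∈ range m, (t : ℤ) + ∑ t ∈ range n, (t : ℤ)) :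
    (∃ σ : Equiv.Perm (Fin m), ∀ i, c i = σ i) ∧ ∃ τ : Equiv.Perm (Fin n), ∀ j, e j = τ j := by
  obtain ⟨i₀, -, hi₀⟩ := exists_min_image univ c ⟨⟨0, by omega⟩, mem_univ _⟩
  have hc_ge := sum_range_le_sum_of_injective hc fun i => hi₀ i (mem_univ i)
  have he_ge := sum_range_le_sum_of_injective he fun j => neg_le_iff_add_nonneg'.mpr (hce i₀ j)
  simp only [sum_add_distrib, sum_const, card_range, nsmul_eq_mul] at hc_ge he_ge
  have hmin : c i₀ = 0 := by
    have : ((m : ℤ) - n) * c i₀ ≤ 0 := by linarith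
    have : (1 : ℤ) ≤ (m : ℤ) - n := by omega
    nlinarith [hc₀ i₀]
  rw [hmin] at hc_ge he_ge
  obtain ⟨σ, hσ⟩ := exists_perm_of_sum_le_sum_range hc (c := 0)
    (fun i => hmin ▸ hi₀ i (mem_univ i)) (by simp only [zero_add]; linarith)
  obtain ⟨τ, hτ⟩ := exists_perm_of_sum_le_sum_range he (c := 0)
    (fun j => by simpa [hmin] using hce i₀ j) (by simp only [zero_add]; linarith)
  exact ⟨⟨σ, by simpa using hσ⟩, τ, by simpa using hτ⟩

lemma exists_perms_of_sum_eq_of_natCast {m n : ℕ} (hmn : n < m) {x : Fin m → ℝ}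
    {y : Fin n → ℝ} (hx : Function.Injective x) (hy : Function.Injective y)
    (hx₀ : ∀ i, ∃ k : ℕ, (k : ℝ) = x i) (hxy : ∀ i j, ∃ k : ℕ, (k : ℝ) = x i + y j)
    (hsum : ∑ i, x i + ∑ j, y j = ∑ t ∈ range m, (t : ℝ) + ∑ t ∈ range n, (t : ℝ)) :
    (∃ σ : Equiv.Perm (Fin m), ∀ i, x i = σ i) ∧ ∃ τ : Equiv.Perm (Fin n), ∀ j, y j = τ j := by
  choose c hc using hx₀
  let i₀ : Fin m := ⟨0, by omega⟩
  choose d hd using hxy i₀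
  let e : Fin n → ℤ := fun j => d j - c i₀
  have hye : ∀ j, y j = e j := fun j => by push_cast [e, hd, hc]; ring
  have hce : ∀ i j, 0 ≤ (c i : ℤ) + e j := fun i j => by
    obtain ⟨k, hk⟩ := hxy i j
    have : ((c i : ℤ) + e j : ℝ) = k := by push_cast [hc, ← hye]; exact hk.symm
    have : (c i : ℤ) + e j = k := by exact_mod_cast this
    omega
  obtain ⟨⟨σ, hσ⟩, τ, hτ⟩ := exists_perms_of_sum_eq hmn (c := fun i => c i) (e := e)
    (fun i i' h => hx (by simpa [← hc] using h))
    (fun j j' h => hy (by simp [hye, h]))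
    (fun i => by positivity)
    hce
    (Int.cast_injective (α := ℝ) (by push_cast; simpa only [hc, ← hye] using hsum))
  exact ⟨⟨σ, fun i => by rw [← hc]; exact_mod_cast hσ i⟩, τ,
    fun j => by rw [hye]; exact_mod_cast hτ j⟩

lemma sum_mem_of_mem_closure {ι M : Type*} [AddCommMonoid M] {S : Set (ι → M)} (T : Finset ι)
    (P : AddSubmonoid M) (hS : ∀ v ∈ S, ∑ z ∈ T, v z ∈ P) {q : ι → M}
    (hq : q ∈ AddSubmonoid.closure S) : ∑ z ∈ T, q z ∈ P :=
  AddSubmonoid.closure_induction hS (by simp)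
    (fun x y _ _ hx hy => by simpa [sum_add_distrib] using P.add_mem hx hy) hq

lemma sum_single_sub_single_mem_mrange_natCast {ι : Type*} [DecidableEq ι] (T : Finset ι)
    {a b : ι} (h : b ∈ T → a ∈ T) :
    ∑ z ∈ T, (Pi.single a 1 - Pi.single b 1 : ι → ℝ) z ∈
      AddMonoidHom.mrange (Nat.castAddMonoidHom ℝ) := by
  by_cases ha : a ∈ T <;> by_cases hb : b ∈ T <;> simp_all [sum_sub_distrib]

lemma exists_single_sub_single_of_mem_glSimple {m n : ℕ} {v : Fin m ⊕ Fin n → ℝ}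
    (hv : v ∈ glSimple m n) :
    ∃ a b, v = Pi.single a 1 - Pi.single b 1 ∧ (∀ i : Fin m, b = .inl i → 0 < (i : ℕ)) ∧
      ∀ j : Fin n, b = .inr j → (j : ℕ) = 0 → ∃ i : Fin m, a = .inl i ∧ (i : ℕ) = 0 := by
  rcases hv with ⟨i, hi, rfl⟩ | ⟨i, hi, rfl⟩ | ⟨i, hi, hni, rfl⟩
  · exact ⟨_, _, rfl, by simp, fun j hj h0 => ⟨_, rfl, by simp_all⟩⟩
  · exact ⟨_, _, rfl, fun i' h => by simp [Fin.ext_iff] at h; omega, by simp⟩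
  · exact ⟨_, _, rfl, fun i' h => by simp [Fin.ext_iff] at h; omega, by simp⟩

section
variable {m n : ℕ} {q : Fin m ⊕ Fin n → ℝ}

lemma sum_eq_zero_of_mem_closure_glSimple (hq : q ∈ AddSubmonoid.closure (glSimple m n)) :
    ∑ z, q z = 0 :=
  sum_mem_of_mem_closure univ ⊥ (fun v hv => by
    obtain ⟨a, b, rfl, -⟩ := exists_single_sub_single_of_mem_glSimple hv
    simp [sum_sub_distrib]) hq

lemma exists_nat_eq_apply_of_mem_closure_glSimple {i₀ : Fin m} (hi₀ : (i₀ : ℕ) = 0)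
    (hq : q ∈ AddSubmonoid.closure (glSimple m n)) : ∃ k : ℕ, (k : ℝ) = q (.inl i₀) := by
  have hS : ∀ v ∈ glSimple m n,
      ∑ z ∈ {.inl i₀}, v z ∈ AddMonoidHom.mrange (Nat.castAddMonoidHom ℝ) := by
    intro v hv
    obtain ⟨a, b, rfl, hb, -⟩ := exists_single_sub_single_of_mem_glSimple hv
    refine sum_single_sub_single_mem_mrange_natCast _ fun h => ?_
    have := hb i₀ (mem_singleton.mp h)
    omega
  obtain ⟨k, hk⟩ := AddMonoidHom.mem_mrange.mp (sum_mem_of_mem_closure _ _ hS hq)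
  exact ⟨k, by simpa using hk⟩

lemma exists_nat_eq_apply_add_apply_of_mem_closure_glSimple {i₀ : Fin m} {j₀ : Fin n}
    (hi₀ : (i₀ : ℕ) = 0) (hj₀ : (j₀ : ℕ) = 0) (hq : q ∈ AddSubmonoid.closure (glSimple m n)) :
    ∃ k : ℕ, (k : ℝ) = q (.inl i₀) + q (.inr j₀) := by
  have hS : ∀ v ∈ glSimple m n,
      ∑ z ∈ {.inl i₀, .inr j₀}, v z ∈ AddMonoidHom.mrange (Nat.castAddMonoidHom ℝ) := by
    intro v hv
    obtain ⟨a, b, rfl, hb, hab⟩ := exists_single_sub_single_of_mem_glSimple hv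
    refine sum_single_sub_single_mem_mrange_natCast _ fun h => ?_
    rcases mem_insert.mp h with rfl | h
    · have := hb i₀ rfl
      omega
    · obtain ⟨i, rfl, hi⟩ := hab j₀ (mem_singleton.mp h) hj₀
      simp [Fin.ext_iff, hi, hi₀]
  obtain ⟨k, hk⟩ := AddMonoidHom.mem_mrange.mp (sum_mem_of_mem_closure _ _ hS hq)
  exact ⟨k, by simpa [sum_pair] using hk⟩
end

section
variable {m n : ℕ} {lam : Fin m ⊕ Fin n → ℝ}

@[simp] lemma glAct_inl (σ : Equiv.Perm (Fin m)) (τ : Equiv.Perm (Fin n))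
    (f : Fin m ⊕ Fin n → ℝ) (i : Fin m) : glAct m n σ τ f (.inl i) = f (.inl (σ.symm i)) := rfl

@[simp] lemma glAct_inr (σ : Equiv.Perm (Fin m)) (τ : Equiv.Perm (Fin n))
    (f : Fin m ⊕ Fin n → ℝ) (j : Fin n) : glAct m n σ τ f (.inr j) = f (.inr (τ.symm j)) := rfl

@[simp] lemma glAct_one (f : Fin m ⊕ Fin n → ℝ) : glAct m n 1 1 f = f := by
  ext (i | j) <;> rfl

lemma sub_glRho_inl (i : Fin m) : ((m : ℝ) - 1) / 2 - glRho m n (.inl i) = i := by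
  simp only [glRho, Sum.elim_inl]; ring

lemma sub_glRho_inr (j : Fin n) : ((n : ℝ) - 1) / 2 - glRho m n (.inr j) = j := by
  simp only [glRho, Sum.elim_inr]; ring

lemma injective_inl_of_regular
    (hstab : ∀ σ τ, glAct m n σ τ lam = lam → σ = 1 ∧ τ = 1) :
    Function.Injective fun i => lam (.inl i) := by
  intro i i' h
  by_contra hne
  refine hne (Equiv.swap_eq_one_iff.mp (hstab _ 1 ?_).1)
  ext (z | z)
  · simpa using Equiv.apply_swap_eq_self (v := fun i => lam (.inl i)) h z
  · rfl

lemma injective_inr_of_regular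
    (hstab : ∀ σ τ, glAct m n σ τ lam = lam → σ = 1 ∧ τ = 1) :
    Function.Injective fun j => lam (.inr j) := by
  intro j j' h
  by_contra hne
  refine hne (Equiv.swap_eq_one_iff.mp (hstab 1 _ ?_).2)
  ext (z | z)
  · rfl
  · simpa using Equiv.apply_swap_eq_self (v := fun j => lam (.inr j)) h z

lemma eq_glAct_glRho_of {σ : Equiv.Perm (Fin m)} {τ : Equiv.Perm (Fin n)}
    (hσ : ∀ i, ((m : ℝ) - 1) / 2 - lam (.inl i) = σ i)
    (hτ : ∀ j, ((n : ℝ) - 1) / 2 - lam (.inr j) = τ j) :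
    lam = glAct m n σ.symm τ.symm (glRho m n) := by
  ext (i | j)
  · rw [glAct_inl, Equiv.symm_symm]
    linarith [hσ i, sub_glRho_inl (n := n) (σ i)]
  · rw [glAct_inr, Equiv.symm_symm]
    linarith [hτ j, sub_glRho_inr (m := m) (τ j)]

lemma exists_nat_eq_sub_inl_of_orbit
    (horb : ∀ σ τ, glRho m n - glAct m n σ τ lam ∈ AddSubmonoid.closure (glSimple m n))
    (i : Fin m) :
    ∃ k : ℕ, (k : ℝ) = ((m : ℝ) - 1) / 2 - lam (.inl i) := by
  simpa [glRho] using exists_nat_eq_apply_of_mem_closure_glSimple (i₀ := ⟨0, i.pos⟩) rfl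
    (horb (Equiv.swap ⟨0, i.pos⟩ i) 1)

lemma exists_nat_eq_sub_inl_add_sub_inr_of_orbit
    (horb : ∀ σ τ, glRho m n - glAct m n σ τ lam ∈ AddSubmonoid.closure (glSimple m n))
    (i : Fin m) (j : Fin n) :
    ∃ k : ℕ, (k : ℝ) =
      (((m : ℝ) - 1) / 2 - lam (.inl i)) + (((n : ℝ) - 1) / 2 - lam (.inr j)) := by
  simpa [glRho] using exists_nat_eq_apply_add_apply_of_mem_closure_glSimple
    (i₀ := ⟨0, i.pos⟩) (j₀ := ⟨0, j.pos⟩) rfl rfl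
    (horb (Equiv.swap ⟨0, i.pos⟩ i) (Equiv.swap ⟨0, j.pos⟩ j))

lemma sum_sub_inl_add_sum_sub_inr_of_orbit
    (horb : ∀ σ τ, glRho m n - glAct m n σ τ lam ∈ AddSubmonoid.closure (glSimple m n)) :
    ∑ i, (((m : ℝ) - 1) / 2 - lam (.inl i)) + ∑ j, (((n : ℝ) - 1) / 2 - lam (.inr j)) =
      ∑ t ∈ range m, (t : ℝ) + ∑ t ∈ range n, (t : ℝ) := by
  have h := sum_eq_zero_of_mem_closure_glSimple (horb 1 1)
  rw [glAct_one, Fintype.sum_sum_type] at h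
  have hε : ∀ i : Fin m, ((m : ℝ) - 1) / 2 - lam (.inl i) = i + (glRho m n - lam) (.inl i) := by
    intro i; rw [← sub_glRho_inl (n := n) i, Pi.sub_apply]; ring
  have hδ : ∀ j : Fin n, ((n : ℝ) - 1) / 2 - lam (.inr j) = j + (glRho m n - lam) (.inr j) := by
    intro j; rw [← sub_glRho_inr (m := m) j, Pi.sub_apply]; ring
  simp only [hε, hδ, sum_add_distrib, Fin.sum_univ_eq_sum_range (fun t => (t : ℝ))]
  linarith
end

theorem gl_regular_orbit_general (m n : ℕ) (hmn : n < m)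
    (lam : Fin m ⊕ Fin n → ℝ)
    (hstab : ∀ (σ : Equiv.Perm (Fin m)) (τ : Equiv.Perm (Fin n)),
      glAct m n σ τ lam = lam → σ = 1 ∧ τ = 1)
    (horb : ∀ (σ : Equiv.Perm (Fin m)) (τ : Equiv.Perm (Fin n)),
      glRho m n - glAct m n σ τ lam ∈ AddSubmonoid.closure (glSimple m n)) :
    ∃ (σ : Equiv.Perm (Fin m)) (τ : Equiv.Perm (Fin n)),
      lam = glAct m n σ τ (glRho m n) := by
  obtain ⟨⟨σ, hσ⟩, τ, hτ⟩ := exists_perms_of_sum_eq_of_natCast hmn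
    (sub_right_injective.comp (injective_inl_of_regular hstab))
    (sub_right_injective.comp (injective_inr_of_regular hstab))
    (exists_nat_eq_sub_inl_of_orbit horb) (exists_nat_eq_sub_inl_add_sub_inr_of_orbit horb)
    (sum_sub_inl_add_sum_sub_inr_of_orbit horb)
  exact ⟨σ.symm, τ.symm, eq_glAct_glRho_of hσ hτ⟩

/-- For `gl(m|n)` with `m > n`, the orbit `Wρ₀` is the only regular `W`-orbit
lying entirely in `ρ₀ − Q⁺`. -/
theorem gl_regular_orbit (m n : ℕ) (hn : 1 ≤ n) (hmn : n < m)
    (lam : Fin m ⊕ Fin n → ℝ)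
    (hstab : ∀ (σ : Equiv.Perm (Fin m)) (τ : Equiv.Perm (Fin n)),
      glAct m n σ τ lam = lam → σ = 1 ∧ τ = 1)
    (horb : ∀ (σ : Equiv.Perm (Fin m)) (τ : Equiv.Perm (Fin n)),
      glRho m n - glAct m n σ τ lam ∈ AddSubmonoid.closure (glSimple m n)) :
    ∃ (σ : Equiv.Perm (Fin m)) (τ : Equiv.Perm (Fin n)),
      lam = glAct m n σ τ (glRho m n) :=
  gl_regular_orbit_general m n hmn lam hstab horb
end

section
/- Let n ≥ 2 be an integer. In V = ℝ^{n+1}, with standard basis vectors denoted ε_1,…,ε_n,δ, let W be the group of signed permutations of the ε-coordinates (all maps sending each ε_i to ±ε_{σ(i)} for a permutation σ ∈ S_n) fixing δ, let ρ_0 := Σ_{i=1}^n (n−i+1)ε_i, let Π := {ε_1−ε_2, ε_2−ε_3, …, ε_{n−1}−ε_n, ε_n−δ, ε_n+δ}, and let Q^+ be the set of linear combinations of elements of Π with nonnegative integer coefficients. If λ ∈ V has trivial stabilizer in W and the whole orbit Wλ is contained in ρ_0 − Q^+, then λ ∈ Wρ_0. -/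
/-!
Regularity forces the ε-coordinates of `λ` to be nonzero with pairwise distinct absolute values,
and they are integers since `ρ₀ − λ ∈ Q⁺`. The functionals `∑ εᵢ* ± δ*` are nonnegative on `Π`;
applied to `ρ₀ − wλ`, for the sign change `w` making all ε-coordinates nonnegative, they give
`|λ_δ| + ∑ |λᵢ| ≤ ∑ ρ₀ = 1 + ⋯ + n`. Distinct positive integers with sum at most `1 + ⋯ + n`
are `1, …, n`, so equality holds, `λ_δ = 0`, and `λ` is a signed permutation of `ρ₀`.
-/

/-- The action of a signed permutation `(σ,η)` (`σ ∈ S_n`, `η ∈ {±1}^n`) on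
`ℝ^{n+1} = span(ε_1,…,ε_n,δ)`, sending `ε_i ↦ η_i ε_{σ(i)}` and fixing
`δ`. -/
noncomputable def cAct (n : ℕ) (σ : Equiv.Perm (Fin n)) (η : Fin n → ℤˣ)
    (f : Fin n ⊕ Unit → ℝ) : Fin n ⊕ Unit → ℝ :=
  Sum.elim (fun j => ((η (σ.symm j) : ℤ) : ℝ) * f (Sum.inl (σ.symm j)))
    (fun u => f (Sum.inr u))

/-- `ρ₀ = Σ_{i=1}^n (n−i+1)ε_i` for `C(n)` (`1`-indexed; coordinates here
are `0`-indexed). -/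
noncomputable def cRho (n : ℕ) : Fin n ⊕ Unit → ℝ :=
  Sum.elim (fun i => (n : ℝ) - (i : ℕ)) (fun _ => 0)

/-- The simple roots `Π = {ε_1−ε_2, …, ε_{n−1}−ε_n, ε_n−δ, ε_n+δ}` of `C(n)`
(written `0`-indexed). -/
noncomputable def cSimple (n : ℕ) : Set (Fin n ⊕ Unit → ℝ) :=
  {v | (∃ i : Fin n, ∃ hi : (i : ℕ) + 1 < n,
          v = Pi.single (Sum.inl i) 1 - Pi.single (Sum.inl ⟨(i : ℕ) + 1, hi⟩) 1) ∨
       (∃ hn : 0 < n,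
          v = Pi.single (Sum.inl ⟨n - 1, by omega⟩) 1 - Pi.single (Sum.inr ()) 1) ∨
       (∃ hn : 0 < n,
          v = Pi.single (Sum.inl ⟨n - 1, by omega⟩) 1 + Pi.single (Sum.inr ()) 1)}

open Finset

lemma Finset.le_card_of_sum_le_sum_range {s : Finset ℤ} (hs : ∀ x ∈ s, 1 ≤ x)
    (hsum : ∑ x ∈ s, x ≤ ∑ i ∈ range #s, (1 + i : ℤ)) {x : ℤ} (hx : x ∈ s) : x ≤ #s := by
  have hcard : #(s.erase x) + 1 = #s := card_erase_add_one hx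
  have hrest := sum_range_le_sum (s := s.erase x) (c := 1) fun y hy => hs y (mem_of_mem_erase hy)
  rw [← sum_erase_add s _ hx, ← hcard, sum_range_succ] at hsum
  linarith

lemma Fin.sum_natCast_sub_eq_sum_range (n : ℕ) :
    ∑ j : Fin n, ((n : ℤ) - j) = ∑ i ∈ range n, (1 + i : ℤ) := by
  rw [← Fin.sum_univ_eq_sum_range (fun i => (1 + i : ℤ)), ← Equiv.sum_comp Fin.revPerm]
  refine sum_congr rfl fun j _ => ?_
  rw [Fin.revPerm_apply, Fin.val_rev]
  omega

lemma exists_perm_eq_sub_of_sum_le {n : ℕ} (b : Fin n → ℤ) (hb : Function.Injective b)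
    (hpos : ∀ j, 1 ≤ b j) (hsum : ∑ j, b j ≤ ∑ j : Fin n, ((n : ℤ) - j)) :
    ∃ σ : Equiv.Perm (Fin n), ∀ j, b j = n - σ j := by
  have hcard : #(univ.image b) = n := by simp [card_image_of_injective _ hb]
  have hle : ∀ j, b j ≤ n := fun j => by
    have hsum' : ∑ x ∈ univ.image b, x ≤ ∑ i ∈ range #(univ.image b), (1 + i : ℤ) := by
      rwa [sum_image hb.injOn, hcard, ← Fin.sum_natCast_sub_eq_sum_range]
    simpa [hcard] using
      le_card_of_sum_le_sum_range (by simpa using hpos) hsum' (mem_image_of_mem b (mem_univ j))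
  let τ : Fin n → Fin n := fun j => ⟨(n - b j).toNat, by have := hpos j; have := hle j; omega⟩
  have hτ : τ.Injective := fun i j hij => by
    have hij' := Fin.mk.inj_iff.mp hij
    have := hle i; have := hle j
    exact hb (by omega)
  refine ⟨Equiv.ofBijective τ hτ.bijective_of_finite, fun j => ?_⟩
  have := hle j
  simp [τ]
  omega

lemma closure_cSimple_le_range_intCast (n : ℕ) : AddSubmonoid.closure (cSimple n) ≤
    AddMonoidHom.mrange (AddMonoidHom.compLeft (Int.castAddHom ℝ) (Fin n ⊕ Unit)) := by
  rw [AddSubmonoid.closure_le]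
  rintro v (⟨i, hi, rfl⟩ | ⟨_, rfl⟩ | ⟨_, rfl⟩)
  · exact ⟨Pi.single _ 1 - Pi.single _ 1, by ext; simp [Pi.single_apply]; rfl⟩
  · exact ⟨Pi.single _ 1 - Pi.single _ 1, by ext; simp [Pi.single_apply]; rfl⟩
  · exact ⟨Pi.single _ 1 + Pi.single _ 1, by ext; simp [Pi.single_apply]; rfl⟩

lemma abs_apply_inr_le_sum_of_mem_closure_cSimple {n : ℕ} {q : Fin n ⊕ Unit → ℝ}
    (hq : q ∈ AddSubmonoid.closure (cSimple n)) :
    |q (Sum.inr ())| ≤ ∑ j, q (Sum.inl j) := by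
  induction hq using AddSubmonoid.closure_induction with
  | mem v hv =>
    rcases hv with ⟨i, hi, rfl⟩ | ⟨_, rfl⟩ | ⟨_, rfl⟩ <;>
      simp [Pi.single_apply, Finset.sum_sub_distrib]
  | zero => simp
  | add a b _ _ ha hb =>
    simp only [Pi.add_apply, Finset.sum_add_distrib]
    exact (abs_add_le _ _).trans (add_le_add ha hb)

lemma cAct_inl (n : ℕ) (σ : Equiv.Perm (Fin n)) (η : Fin n → ℤˣ)
    (f : Fin n ⊕ Unit → ℝ) (j : Fin n) :
    cAct n σ η f (Sum.inl j) = ((η (σ.symm j) : ℤ) : ℝ) * f (Sum.inl (σ.symm j)) := rfl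

@[simp] lemma cAct_one_inl (n : ℕ) (η : Fin n → ℤˣ) (f : Fin n ⊕ Unit → ℝ) (j : Fin n) :
    cAct n 1 η f (Sum.inl j) = ((η j : ℤ) : ℝ) * f (Sum.inl j) := rfl

@[simp] lemma cAct_inr (n : ℕ) (σ : Equiv.Perm (Fin n)) (η : Fin n → ℤˣ)
    (f : Fin n ⊕ Unit → ℝ) (u : Unit) : cAct n σ η f (Sum.inr u) = f (Sum.inr u) := rfl

@[simp] lemma cAct_one_one (n : ℕ) (f : Fin n ⊕ Unit → ℝ) : cAct n 1 1 f = f := by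
  ext (j | u) <;> simp

def CRegular (n : ℕ) (lam : Fin n ⊕ Unit → ℝ) : Prop :=
  ∀ (σ : Equiv.Perm (Fin n)) (η : Fin n → ℤˣ), cAct n σ η lam = lam → σ = 1 ∧ η = fun _ => 1

namespace CRegular

variable {n : ℕ} {lam : Fin n ⊕ Unit → ℝ}

lemma apply_inl_ne_zero (hlam : CRegular n lam) (j : Fin n) : lam (Sum.inl j) ≠ 0 := by
  intro hj
  have hfix : cAct n 1 (Pi.mulSingle j (-1)) lam = lam := by
    ext (k | u)
    · by_cases hk : k = j
      · simp [hk, hj]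
      · simp [hk]
    · rfl
  have := congrFun (hlam _ _ hfix).2 j
  simp at this

lemma injective_abs_apply_inl (hlam : CRegular n lam) :
    Function.Injective fun j => |lam (Sum.inl j)| := by
  intro i j hij
  by_contra hne
  obtain ⟨u, hu⟩ : ∃ u : ℤˣ, lam (Sum.inl i) = (u : ℤ) * lam (Sum.inl j) := by
    rcases abs_eq_abs.mp hij with h | h
    exacts [⟨1, by simp [h]⟩, ⟨-1, by simp [h]⟩]
  have hu' : lam (Sum.inl j) = (u : ℤ) * lam (Sum.inl i) := by
    rw [hu, ← mul_assoc, ← Int.cast_mul, ← Units.val_mul, Int.units_mul_self]; simp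
  have hfix : cAct n (Equiv.swap i j) (Pi.mulSingle i u * Pi.mulSingle j u) lam = lam := by
    ext (k | u)
    · rcases eq_or_ne k i with rfl | hki
      · simp [cAct_inl, hu, Ne.symm hne]
      rcases eq_or_ne k j with rfl | hkj
      · simp [cAct_inl, hu', hne]
      · simp [cAct_inl, Equiv.swap_apply_of_ne_of_ne hki hkj, hki, hkj]
    · rfl
  exact hne (Equiv.swap_eq_one_iff.mp (hlam _ _ hfix).1)

end CRegular

lemma exists_intCast_eq_apply_inl {n : ℕ} {lam : Fin n ⊕ Unit → ℝ}
    (h : cRho n - lam ∈ AddSubmonoid.closure (cSimple n)) (j : Fin n) :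
    ∃ m : ℤ, lam (Sum.inl j) = m := by
  obtain ⟨z, hz⟩ := closure_cSimple_le_range_intCast n h
  refine ⟨n - j - z (Sum.inl j), ?_⟩
  have hj := congrFun hz (Sum.inl j)
  simp only [AddMonoidHom.compLeft_apply, Function.comp_apply, Int.coe_castAddHom, Pi.sub_apply,
    cRho, Sum.elim_inl] at hj
  push_cast
  linarith

noncomputable def signUnit (x : ℝ) : ℤˣ := if 0 ≤ x then 1 else -1

lemma signUnit_mul_self (x : ℝ) : ((signUnit x : ℤ) : ℝ) * x = |x| := by
  unfold signUnit
  split_ifs with hx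
  · simp [abs_of_nonneg hx]
  · simp [abs_of_neg (not_le.mp hx)]

lemma signUnit_mul_abs (x : ℝ) : ((signUnit x : ℤ) : ℝ) * |x| = x := by
  unfold signUnit
  split_ifs with hx
  · simp [abs_of_nonneg hx]
  · simp [abs_of_neg (not_le.mp hx)]

lemma abs_apply_inr_add_sum_abs_le {n : ℕ} {lam : Fin n ⊕ Unit → ℝ}
    (horb : ∀ η : Fin n → ℤˣ, cRho n - cAct n 1 η lam ∈ AddSubmonoid.closure (cSimple n)) :
    |lam (Sum.inr ())| + ∑ j, |lam (Sum.inl j)| ≤ ∑ j : Fin n, ((n : ℝ) - j) := by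
  have h := abs_apply_inr_le_sum_of_mem_closure_cSimple (horb fun k => signUnit (lam (Sum.inl k)))
  simp only [Pi.sub_apply, cAct_one_inl, cAct_inr,
    signUnit_mul_self, cRho, Sum.elim_inl, Sum.elim_inr, zero_sub, abs_neg] at h
  rw [Finset.sum_sub_distrib] at h
  linarith

lemma eq_cAct_cRho_of_abs_eq {n : ℕ} {lam : Fin n ⊕ Unit → ℝ} {σ : Equiv.Perm (Fin n)}
    (hσ : ∀ j, |lam (Sum.inl j)| = n - σ j) (hδ : lam (Sum.inr ()) = 0) :
    lam = cAct n σ.symm (fun k => signUnit (lam (Sum.inl (σ.symm k)))) (cRho n) := by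
  ext (j | ⟨⟩)
  · simp [cAct_inl, cRho, ← hσ, signUnit_mul_abs]
  · simp [cRho, hδ]

theorem Cn_regular_orbit_general (n : ℕ)
    (lam : Fin n ⊕ Unit → ℝ)
    (hstab : ∀ (σ : Equiv.Perm (Fin n)) (η : Fin n → ℤˣ),
      cAct n σ η lam = lam → σ = 1 ∧ η = fun _ => 1)
    (horb : ∀ (σ : Equiv.Perm (Fin n)) (η : Fin n → ℤˣ),
      cRho n - cAct n σ η lam ∈ AddSubmonoid.closure (cSimple n)) :
    ∃ (σ : Equiv.Perm (Fin n)) (η : Fin n → ℤˣ),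
      lam = cAct n σ η (cRho n) := by
  have hreg : CRegular n lam := hstab
  choose a ha using exists_intCast_eq_apply_inl (by simpa using horb 1 1)
  have hbound := abs_apply_inr_add_sum_abs_le (horb 1)
  simp_rw [ha] at hbound
  obtain ⟨σ, hσ⟩ := exists_perm_eq_sub_of_sum_le (fun j => |a j|)
    (fun i j hij => hreg.injective_abs_apply_inl (by simpa [ha] using congrArg ((↑) : ℤ → ℝ) hij))
    (fun j => Int.one_le_abs fun h0 => hreg.apply_inl_ne_zero j (by simp [ha, h0]))
    (by exact_mod_cast (le_add_of_nonneg_left (abs_nonneg _)).trans hbound)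
  have hsum : ∑ j, |a j| = ∑ j : Fin n, ((n : ℤ) - j) := by
    simp only [hσ]
    exact Equiv.sum_comp σ fun k => (n : ℤ) - k
  have hδ : lam (Sum.inr ()) = 0 := by
    have := congrArg ((↑) : ℤ → ℝ) hsum
    push_cast at this
    exact abs_nonpos_iff.mp (by linarith)
  refine ⟨_, _, eq_cAct_cRho_of_abs_eq (σ := σ) (fun j => ?_) hδ⟩
  simpa [ha] using congrArg ((↑) : ℤ → ℝ) (hσ j)

/-- For the Lie superalgebra `C(n)`, the orbit `Wρ₀` is the only regular
`W`-orbit lying entirely in `ρ₀ − Q⁺`. -/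
theorem Cn_regular_orbit (n : ℕ) (hn : 2 ≤ n)
    (lam : Fin n ⊕ Unit → ℝ)
    (hstab : ∀ (σ : Equiv.Perm (Fin n)) (η : Fin n → ℤˣ),
      cAct n σ η lam = lam → σ = 1 ∧ η = fun _ => 1)
    (horb : ∀ (σ : Equiv.Perm (Fin n)) (η : Fin n → ℤˣ),
      cRho n - cAct n σ η lam ∈ AddSubmonoid.closure (cSimple n)) :
    ∃ (σ : Equiv.Perm (Fin n)) (η : Fin n → ℤˣ),
      lam = cAct n σ η (cRho n) :=
  Cn_regular_orbit_general n lam hstab horb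
end

section
/- Let n ≥ 1. In ℝ^{2n} with standard basis vectors ε_1,…,ε_n,δ_1,…,δ_n, let Δ_+ := {ε_i−ε_j : 1≤i<j≤n} ∪ {δ_i−δ_j : 1≤i<j≤n} ∪ {ε_i−δ_j : 1≤i≤j≤n} ∪ {δ_i−ε_j : 1≤i<j≤n}, and let ξ := Σ_{i=1}^n ε_i − Σ_{j=1}^n δ_j. Suppose ξ = Σ_{α∈Δ_+} m_α α with m_α ≥ 0 real for every α ∈ Δ_+. Then m_{ε_i−δ_i} = 1 for every 1 ≤ i ≤ n, and m_α = 0 for every other α ∈ Δ_+. -/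
noncomputable def Ffun (n : ℕ) (k : Fin n) : ((Fin n ⊕ Fin n) → ℝ) →ₗ[ℝ] ℝ :=
  ∑ i ∈ Finset.Iic k,
    ((LinearMap.proj (Sum.inl i) : ((Fin n ⊕ Fin n) → ℝ) →ₗ[ℝ] ℝ) +
     (LinearMap.proj (Sum.inr i) : ((Fin n ⊕ Fin n) → ℝ) →ₗ[ℝ] ℝ))

lemma Ffun_apply (n : ℕ) (k : Fin n) (v : (Fin n ⊕ Fin n) → ℝ) :
    Ffun n k v = ∑ i ∈ Finset.Iic k, (v (Sum.inl i) + v (Sum.inr i)) := by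
  simp [Ffun]

lemma Ffun_single_inl (n : ℕ) (k p : Fin n) :
    Ffun n k (Pi.single (Sum.inl p) 1) = if p ≤ k then 1 else 0 := by
  simp [Ffun_apply, Pi.single_apply]

lemma Ffun_single_inr (n : ℕ) (k p : Fin n) :
    Ffun n k (Pi.single (Sum.inr p) 1) = if p ≤ k then 1 else 0 := by
  simp [Ffun_apply, Pi.single_apply]

lemma chi_diff_nonneg {n : ℕ} (k : Fin n) {i j : Fin n} (hij : i ≤ j) :
    (0:ℝ) ≤ (if i ≤ k then (1:ℝ) else 0) - (if j ≤ k then 1 else 0) := by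
  by_cases h : j ≤ k
  · simp [h, hij.trans h]
  · by_cases h' : i ≤ k <;> simp [h, h']

lemma sum_chi_nonneg {n : ℕ} (k : Fin n) (m : Fin n → Fin n → ℝ)
    (S : Fin n → Finset (Fin n)) (hS : ∀ i j, j ∈ S i → i ≤ j)
    (hm : ∀ i j, j ∈ S i → 0 ≤ m i j) :
    (0:ℝ) ≤ ∑ i, ∑ j ∈ S i,
      m i j * ((if i ≤ k then (1:ℝ) else 0) - (if j ≤ k then 1 else 0)) := by
  refine Finset.sum_nonneg fun i _ => Finset.sum_nonneg fun j hj =>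
    mul_nonneg (hm i j hj) (chi_diff_nonneg k (hS i j hj))

lemma vanish {n : ℕ} (m : Fin n → Fin n → ℝ) (S : Fin n → Finset (Fin n))
    (hS : ∀ i j, j ∈ S i → i ≤ j) (hm : ∀ i j, j ∈ S i → 0 ≤ m i j)
    (k : Fin n)
    (hzero : ∑ i, ∑ j ∈ S i,
      m i j * ((if i ≤ k then (1:ℝ) else 0) - (if j ≤ k then 1 else 0)) = 0)
    (i j : Fin n) (hij : j ∈ S i) (hik : i ≤ k) (hjk : ¬ j ≤ k) : m i j = 0 := by
  have h1 := (Finset.sum_eq_zero_iff_of_nonneg (fun i _ =>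
    Finset.sum_nonneg fun j hj => mul_nonneg (hm i j hj)
      (chi_diff_nonneg k (hS i j hj)))).mp hzero i (Finset.mem_univ i)
  have h2 := (Finset.sum_eq_zero_iff_of_nonneg (fun j hj =>
    mul_nonneg (hm i j hj) (chi_diff_nonneg k (hS i j hj)))).mp h1 j hij
  simpa [hik, hjk] using h2

/-- In `ℝ^{2n}` with basis `ε_1,…,ε_n,δ_1,…,δ_n` (here `ε i = Pi.single
(Sum.inl i) 1`, `δ j = Pi.single (Sum.inr j) 1`), the element
`ξ = Σε_i − Σδ_j` has a unique presentation as a nonnegative linear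
combination of positive roots of `gl(n|n)`, namely `ξ = Σ_i (ε_i − δ_i)`. -/
theorem xi_unique_presentation (n : ℕ) (hn : 1 ≤ n)
    (a b c d : Fin n → Fin n → ℝ)
    (ha : ∀ i j : Fin n, i < j → 0 ≤ a i j)
    (hb : ∀ i j : Fin n, i < j → 0 ≤ b i j)
    (hc : ∀ i j : Fin n, i ≤ j → 0 ≤ c i j)
    (hd : ∀ i j : Fin n, i < j → 0 ≤ d i j)
    (heq : (Sum.elim (fun _ => (1 : ℝ)) (fun _ => (-1 : ℝ)) :
        Fin n ⊕ Fin n → ℝ) =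
      (∑ i : Fin n, ∑ j ∈ Finset.Ioi i, a i j •
          (Pi.single (Sum.inl i) 1 - Pi.single (Sum.inl j) 1 :
            Fin n ⊕ Fin n → ℝ)) +
      (∑ i : Fin n, ∑ j ∈ Finset.Ioi i, b i j •
          (Pi.single (Sum.inr i) 1 - Pi.single (Sum.inr j) 1 :
            Fin n ⊕ Fin n → ℝ)) +
      (∑ i : Fin n, ∑ j ∈ Finset.Ici i, c i j •
          (Pi.single (Sum.inl i) 1 - Pi.single (Sum.inr j) 1 :
            Fin n ⊕ Fin n → ℝ)) +
      (∑ i : Fin n, ∑ j ∈ Finset.Ioi i, d i j •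
          (Pi.single (Sum.inr i) 1 - Pi.single (Sum.inl j) 1 :
            Fin n ⊕ Fin n → ℝ))) :
    (∀ i : Fin n, c i i = 1) ∧
    (∀ i j : Fin n, i < j →
      a i j = 0 ∧ b i j = 0 ∧ c i j = 0 ∧ d i j = 0) := by
  -- hypotheses of `vanish` for each of the four sums
  have hSIoi : ∀ i j : Fin n, j ∈ Finset.Ioi i → i ≤ j :=
    fun i j hj => le_of_lt (Finset.mem_Ioi.mp hj)
  have hSIci : ∀ i j : Fin n, j ∈ Finset.Ici i → i ≤ j :=
    fun i j hj => Finset.mem_Ici.mp hj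
  have hma : ∀ i j : Fin n, j ∈ Finset.Ioi i → 0 ≤ a i j :=
    fun i j hj => ha i j (Finset.mem_Ioi.mp hj)
  have hmb : ∀ i j : Fin n, j ∈ Finset.Ioi i → 0 ≤ b i j :=
    fun i j hj => hb i j (Finset.mem_Ioi.mp hj)
  have hmc : ∀ i j : Fin n, j ∈ Finset.Ici i → 0 ≤ c i j :=
    fun i j hj => hc i j (Finset.mem_Ici.mp hj)
  have hmd : ∀ i j : Fin n, j ∈ Finset.Ioi i → 0 ≤ d i j :=
    fun i j hj => hd i j (Finset.mem_Ioi.mp hj)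
  -- apply the functional F_k to both sides of heq
  have key : ∀ k : Fin n,
      (∑ i, ∑ j ∈ Finset.Ioi i,
        a i j * ((if i ≤ k then (1:ℝ) else 0) - (if j ≤ k then 1 else 0))) = 0 ∧
      (∑ i, ∑ j ∈ Finset.Ioi i,
        b i j * ((if i ≤ k then (1:ℝ) else 0) - (if j ≤ k then 1 else 0))) = 0 ∧
      (∑ i, ∑ j ∈ Finset.Ici i,
        c i j * ((if i ≤ k then (1:ℝ) else 0) - (if j ≤ k then 1 else 0))) = 0 ∧
      (∑ i, ∑ j ∈ Finset.Ioi i,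
        d i j * ((if i ≤ k then (1:ℝ) else 0) - (if j ≤ k then 1 else 0))) = 0 := by
    intro k
    have h := congrArg (Ffun n k) heq
    simp only [map_add, map_sum, map_smul, map_sub, Ffun_single_inl, Ffun_single_inr,
      smul_eq_mul] at h
    rw [Ffun_apply] at h
    simp only [Sum.elim_inl, Sum.elim_inr, add_neg_cancel, Finset.sum_const_zero] at h
    have n1 := sum_chi_nonneg k a _ hSIoi hma
    have n2 := sum_chi_nonneg k b _ hSIoi hmb
    have n3 := sum_chi_nonneg k c _ hSIci hmc
    have n4 := sum_chi_nonneg k d _ hSIoi hmd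
    refine ⟨by linarith, by linarith, by linarith, by linarith⟩
  -- off-diagonal coefficients vanish
  have hA : ∀ i j : Fin n, i < j → a i j = 0 := fun i j hij =>
    vanish a _ hSIoi hma i (key i).1 i j (Finset.mem_Ioi.mpr hij) le_rfl (not_le.mpr hij)
  have hB : ∀ i j : Fin n, i < j → b i j = 0 := fun i j hij =>
    vanish b _ hSIoi hmb i (key i).2.1 i j (Finset.mem_Ioi.mpr hij) le_rfl (not_le.mpr hij)
  have hC : ∀ i j : Fin n, i < j → c i j = 0 := fun i j hij =>
    vanish c _ hSIci hmc i (key i).2.2.1 i j (Finset.mem_Ici.mpr hij.le) le_rfl (not_le.mpr hij)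
  have hD : ∀ i j : Fin n, i < j → d i j = 0 := fun i j hij =>
    vanish d _ hSIoi hmd i (key i).2.2.2 i j (Finset.mem_Ioi.mpr hij) le_rfl (not_le.mpr hij)
  refine ⟨?_, fun i j hij => ⟨hA i j hij, hB i j hij, hC i j hij, hD i j hij⟩⟩
  -- now simplify heq using the vanishing
  have e1 : (∑ i : Fin n, ∑ j ∈ Finset.Ioi i, a i j •
      (Pi.single (Sum.inl i) 1 - Pi.single (Sum.inl j) 1 : Fin n ⊕ Fin n → ℝ)) = 0 :=
    Finset.sum_eq_zero fun i _ => Finset.sum_eq_zero fun j hj => by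
      rw [hA i j (Finset.mem_Ioi.mp hj), zero_smul]
  have e2 : (∑ i : Fin n, ∑ j ∈ Finset.Ioi i, b i j •
      (Pi.single (Sum.inr i) 1 - Pi.single (Sum.inr j) 1 : Fin n ⊕ Fin n → ℝ)) = 0 :=
    Finset.sum_eq_zero fun i _ => Finset.sum_eq_zero fun j hj => by
      rw [hB i j (Finset.mem_Ioi.mp hj), zero_smul]
  have e4 : (∑ i : Fin n, ∑ j ∈ Finset.Ioi i, d i j •
      (Pi.single (Sum.inr i) 1 - Pi.single (Sum.inl j) 1 : Fin n ⊕ Fin n → ℝ)) = 0 :=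
    Finset.sum_eq_zero fun i _ => Finset.sum_eq_zero fun j hj => by
      rw [hD i j (Finset.mem_Ioi.mp hj), zero_smul]
  have e3 : (∑ i : Fin n, ∑ j ∈ Finset.Ici i, c i j •
      (Pi.single (Sum.inl i) 1 - Pi.single (Sum.inr j) 1 : Fin n ⊕ Fin n → ℝ)) =
      ∑ i : Fin n, c i i •
        (Pi.single (Sum.inl i) 1 - Pi.single (Sum.inr i) 1 : Fin n ⊕ Fin n → ℝ) :=
    Finset.sum_congr rfl fun i _ =>
      Finset.sum_eq_single_of_mem i (Finset.mem_Ici.mpr le_rfl) fun j hj hne => by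
        rw [hC i j (lt_of_le_of_ne (Finset.mem_Ici.mp hj) (Ne.symm hne)), zero_smul]
  rw [e1, e2, e3, e4, zero_add, add_zero, zero_add] at heq
  intro m
  have h := congrFun heq (Sum.inl m)
  simp only [Finset.sum_apply, Pi.smul_apply, Pi.sub_apply, Pi.single_apply,
    Sum.elim_inl, smul_eq_mul, Sum.inl.injEq, reduceCtorEq, if_false, sub_zero,
    mul_ite, mul_one, mul_zero] at h
  rw [Finset.sum_ite_eq Finset.univ m (fun i => c i i)] at h
  simpa using h.symm
end

section
/- Let m ≥ n ≥ 1 be integers and define r ∈ ℚ^m by r_i = (m−n−1)/2 for 1 ≤ i ≤ n and r_i = (m+n+1−2i)/2 for n < i ≤ m. If a permutation w ∈ S_m satisfies r_{w(i)} = r_i for all 1 ≤ i ≤ m, and w(i) ≤ i for all 1 ≤ i ≤ n, then w is the identity. -/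
/-- At a minimal counterexample `i`, the smaller point `f i` would already be fixed, so
`f (f i) = f i` and injectivity gives `f i = i`. -/
theorem Function.Injective.eq_self_of_le_self_on_lowerSet {α : Type*} [LinearOrder α]
    [WellFoundedLT α] {f : α → α} (hf : Function.Injective f) {s : Set α} (hs : IsLowerSet s)
    (hle : ∀ i ∈ s, f i ≤ i) : ∀ i ∈ s, f i = i := by
  intro i
  induction i using WellFoundedLT.induction with
  | _ i ih =>
    intro hi
    refine (hle i hi).eq_or_lt.resolve_right fun hlt => hlt.ne ?_
    exact hf (ih (f i) hlt (hs hlt.le hi))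

theorem Function.Injective.mapsTo_compl_of_eqOn_id {α : Type*} {f : α → α}
    (hf : Function.Injective f) {s : Set α} (hfix : ∀ i ∈ s, f i = i) : Set.MapsTo f sᶜ sᶜ :=
  fun i hi hfi => hi (hf (hfix (f i) hfi) ▸ hfi)

/-- Coordinates are `0`-indexed, so the paper's `r_i = (m+n+1−2i)/2` becomes `(m+n−1−2i)/2`. -/
theorem gl_stabilizer_step_general (m n : ℕ)
    (r : Fin m → ℚ)
    (hr : ∀ i : Fin m, r i =
      if (i : ℕ) < n then ((m : ℚ) - n - 1) / 2
      else ((m : ℚ) + n - 1 - 2 * (i : ℕ)) / 2)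
    (w : Equiv.Perm (Fin m))
    (h1 : ∀ i, r (w i) = r i)
    (h2 : ∀ i : Fin m, (i : ℕ) < n → ((w i : Fin m) : ℕ) ≤ (i : ℕ)) :
    w = 1 := by
  set s : Set (Fin m) := {i | (i : ℕ) < n}
  have hs : IsLowerSet s := fun _ _ hle hlt => lt_of_le_of_lt (Fin.le_iff_val_le_val.1 hle) hlt
  have hfix : ∀ i ∈ s, w i = i :=
    w.injective.eq_self_of_le_self_on_lowerSet hs fun i hi => Fin.le_iff_val_le_val.2 (h2 i hi)
  have hanti : StrictAntiOn r sᶜ := by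
    intro i (hi : ¬(i : ℕ) < n) j (hj : ¬(j : ℕ) < n) hij
    rw [hr, hr, if_neg hj, if_neg hi]
    have : ((i : ℕ) : ℚ) < (j : ℕ) := by exact_mod_cast hij
    linarith
  ext1 i
  by_cases hi : i ∈ s
  · exact hfix i hi
  · exact hanti.injOn (w.injective.mapsTo_compl_of_eqOn_id hfix hi) hi (h1 i)

/-- Step (ii) for `gl(m|n)`: if `w ∈ S_m` stabilizes the vector `r` of
`ρ`-coordinates (`r_i = (m−n−1)/2` for `i ≤ n`, `r_i = (m+n+1−2i)/2` for
`i > n`, written `1`-indexed; coordinates here are `0`-indexed) and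
`w(i) ≤ i` for all `i ≤ n`, then `w = 1`. -/
theorem gl_stabilizer_step (m n : ℕ) (hn : 1 ≤ n) (hmn : n ≤ m)
    (r : Fin m → ℚ)
    (hr : ∀ i : Fin m, r i =
      if (i : ℕ) < n then ((m : ℚ) - n - 1) / 2
      else ((m : ℚ) + n - 1 - 2 * (i : ℕ)) / 2)
    (w : Equiv.Perm (Fin m))
    (h1 : ∀ i, r (w i) = r i)
    (h2 : ∀ i : Fin m, (i : ℕ) < n → ((w i : Fin m) : ℕ) ≤ (i : ℕ)) :
    w = 1 :=
  gl_stabilizer_step_general m n r hr w h1 h2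
end

section
/- Let m ≥ n ≥ 1 and, in the field Q(u_1,…,u_m,v_1,…,v_n) of rational functions over Q, define X := Σ_{w∈S_m} sgn(w) · (∏_{i=1}^{n} u_{w(i)}^{m−n−1}) · (∏_{i=n+1}^{m} u_{w(i)}^{m+n+1−2i}) · (∏_{j=1}^{n} v_j^{n+1−m}) / ∏_{i=1}^{n} (1 + v_i^2·u_{w(i)}^{−2}). Then for every τ ∈ S_n, the Q-algebra automorphism of Q(u_1,…,u_m,v_1,…,v_n) sending v_j to v_{τ(j)} for all j and fixing each u_i maps X to sgn(τ)·X. -/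
/-!
Applying `φ` to the `w`-summand of `X` replaces `v` by `v ∘ τ`. Let `σ ∈ S_m` extend `τ` by the
identity on the indices `≥ n`. Substituting `w ↦ wσ` undoes the replacement, since each product
over `Fin n` is just reindexed by `τ` and the product over the indices `≥ n` does not change.
Also `sgn (wσ) = sgn w · sgn τ`.
-/

open Equiv Finset

namespace GlWeylDenominator

variable {K L : Type*} [Field K] [Field L] {m n : ℕ}

/-- The summand of `X` indexed by `w ∈ S_m`, without its sign. -/
def summand (hmn : n ≤ m) (u : Fin m → K) (v : Fin n → K) (w : Perm (Fin m)) : K :=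
  (∏ i : Fin n, u (w (Fin.castLE hmn i)) ^ ((m : ℤ) - (n : ℤ) - 1)) *
    (∏ i ∈ univ.filter (fun i : Fin m => n ≤ (i : ℕ)),
      u (w i) ^ ((m : ℤ) + (n : ℤ) - 1 - 2 * (i : ℤ))) *
    (∏ j : Fin n, v j ^ ((n : ℤ) + 1 - (m : ℤ))) /
    ∏ i : Fin n, (1 + v i ^ 2 * u (w (Fin.castLE hmn i)) ^ (-2 : ℤ))

theorem map_summand {F : Type*} [FunLike F K L] [RingHomClass F K L] (φ : F) (hmn : n ≤ m)
    (u : Fin m → K) (v : Fin n → K) (w : Perm (Fin m)) : φ (summand hmn u v w) = summand hmn (φ ∘ u) (φ ∘ v) w := by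
  simp only [summand, map_div₀, map_mul, map_prod, map_zpow₀, map_add, map_one, map_pow,
    Function.comp_apply]

theorem viaFintypeEmbedding_castLEEmb_apply_of_le (hmn : n ≤ m) (τ : Perm (Fin n))
    {i : Fin m} (hi : n ≤ (i : ℕ)) : τ.viaFintypeEmbedding (Fin.castLEEmb hmn) i = i := by
  refine Perm.viaFintypeEmbedding_apply_notMem_range _ _ ?_
  rintro ⟨j, rfl⟩
  exact absurd hi (by simp)

theorem summand_comp_mul_viaFintypeEmbedding (hmn : n ≤ m) (u : Fin m → K) (v : Fin n → K)
    (τ : Perm (Fin n)) (w : Perm (Fin m)) :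
    summand hmn u (v ∘ τ) (w * τ.viaFintypeEmbedding (Fin.castLEEmb hmn)) =
      summand hmn u v w := by
  set σ := τ.viaFintypeEmbedding (Fin.castLEEmb hmn)
  have hcast (i : Fin n) : σ (Fin.castLE hmn i) = Fin.castLE hmn (τ i) :=
    Perm.viaFintypeEmbedding_apply_image τ (Fin.castLEEmb hmn) i
  have hfix : ∏ i ∈ univ.filter (fun i : Fin m => n ≤ (i : ℕ)),
        u (w (σ i)) ^ ((m : ℤ) + (n : ℤ) - 1 - 2 * (i : ℤ)) =
      ∏ i ∈ univ.filter (fun i : Fin m => n ≤ (i : ℕ)),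
        u (w i) ^ ((m : ℤ) + (n : ℤ) - 1 - 2 * (i : ℤ)) :=
    prod_congr rfl fun i hi => by
      rw [viaFintypeEmbedding_castLEEmb_apply_of_le hmn τ (mem_filter.mp hi).2]
  simp only [summand, Perm.mul_apply, Function.comp_apply, hcast]
  rw [hfix,
    Equiv.prod_comp τ fun i => u (w (Fin.castLE hmn i)) ^ ((m : ℤ) - (n : ℤ) - 1),
    Equiv.prod_comp τ fun j => v j ^ ((n : ℤ) + 1 - (m : ℤ)),
    Equiv.prod_comp τ fun i => 1 + v i ^ 2 * u (w (Fin.castLE hmn i)) ^ (-2 : ℤ)]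

end GlWeylDenominator

open GlWeylDenominator in
theorem gl_X_skew_invariant_general (m n : ℕ) (hmn : n ≤ m)
    (K : Type*) [Field K]
    (u : Fin m → K) (v : Fin n → K)
    (X : K)
    (hX : X = ∑ w : Equiv.Perm (Fin m),
        ((Equiv.Perm.sign w : ℤ) : K) *
          ((∏ i : Fin n, u (w (Fin.castLE hmn i)) ^ ((m : ℤ) - (n : ℤ) - 1)) *
           (∏ i ∈ Finset.univ.filter (fun i : Fin m => n ≤ (i : ℕ)),
              u (w i) ^ ((m : ℤ) + (n : ℤ) - 1 - 2 * (i : ℤ))) *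
           (∏ j : Fin n, v j ^ ((n : ℤ) + 1 - (m : ℤ))) /
           ∏ i : Fin n, (1 + v i ^ 2 * u (w (Fin.castLE hmn i)) ^ (-2 : ℤ))))
    (τ : Equiv.Perm (Fin n)) (φ : K ≃+* K)
    (hφu : ∀ i, φ (u i) = u i) (hφv : ∀ j, φ (v j) = v (τ j)) :
    φ X = ((Equiv.Perm.sign τ : ℤ) : K) * X := by
  replace hX : X = ∑ w, ((Perm.sign w : ℤ) : K) * summand hmn u v w := hX
  set σ := τ.viaFintypeEmbedding (Fin.castLEEmb hmn)
  have hu : ⇑φ ∘ u = u := funext hφu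
  have hv : ⇑φ ∘ v = v ∘ τ := funext hφv
  have hφ (w : Perm (Fin m)) : φ (summand hmn u v w) = summand hmn u (v ∘ τ) w := by
    rw [map_summand φ, hu, hv]
  calc φ X = ∑ w, ((Perm.sign w : ℤ) : K) * summand hmn u (v ∘ τ) w := by
        simp only [hX, map_sum, map_mul, map_intCast, hφ]
    _ = ∑ w, ((Perm.sign (w * σ) : ℤ) : K) * summand hmn u (v ∘ τ) (w * σ) :=
        (Fintype.sum_equiv (Equiv.mulRight σ) _ _ fun _ => rfl).symm
    _ = ((Perm.sign τ : ℤ) : K) * X := by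
        simp only [Perm.sign_mul, σ, Perm.viaFintypeEmbedding_sign,
          summand_comp_mul_viaFintypeEmbedding, hX, mul_sum]
        push_cast
        exact sum_congr rfl fun _ _ => by ring

/-- `S_n`-skew-invariance of the right-hand side `X` of the Weyl denominator
identity for `gl(m|n)`: any (automatically `ℚ`-linear) field automorphism `φ`
of `ℚ(u,v)` fixing the `u`'s and permuting the `v`'s by `τ ∈ S_n` maps `X`
to `sgn(τ)·X`. -/
theorem gl_X_skew_invariant (m n : ℕ) (hn : 1 ≤ n) (hmn : n ≤ m)
    (K : Type*) [Field K] [Algebra (MvPolynomial (Fin m ⊕ Fin n) ℚ) K]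
    [IsFractionRing (MvPolynomial (Fin m ⊕ Fin n) ℚ) K]
    (u : Fin m → K) (v : Fin n → K)
    (hu : ∀ i, u i = algebraMap (MvPolynomial (Fin m ⊕ Fin n) ℚ) K
      (MvPolynomial.X (Sum.inl i)))
    (hv : ∀ j, v j = algebraMap (MvPolynomial (Fin m ⊕ Fin n) ℚ) K
      (MvPolynomial.X (Sum.inr j)))
    (X : K)
    (hX : X = ∑ w : Equiv.Perm (Fin m),
        ((Equiv.Perm.sign w : ℤ) : K) *
          ((∏ i : Fin n, u (w (Fin.castLE hmn i)) ^ ((m : ℤ) - (n : ℤ) - 1)) *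
           (∏ i ∈ Finset.univ.filter (fun i : Fin m => n ≤ (i : ℕ)),
              u (w i) ^ ((m : ℤ) + (n : ℤ) - 1 - 2 * (i : ℤ))) *
           (∏ j : Fin n, v j ^ ((n : ℤ) + 1 - (m : ℤ))) /
           ∏ i : Fin n, (1 + v i ^ 2 * u (w (Fin.castLE hmn i)) ^ (-2 : ℤ))))
    (τ : Equiv.Perm (Fin n)) (φ : K ≃+* K)
    (hφu : ∀ i, φ (u i) = u i) (hφv : ∀ j, φ (v j) = v (τ j)) :
    φ X = ((Equiv.Perm.sign τ : ℤ) : K) * X :=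
  gl_X_skew_invariant_general m n hmn K u v X hX τ φ hφu hφv
end

section
/- Let m > n ≥ 1 and work in Q(u_1,…,u_m,v_1,…,v_n). Let G be the group of pairs (σ,η) with σ ∈ S_m, η ∈ {±1}^m, acting by the Q-algebra automorphism u_i ↦ u_{σ(i)}^{η_i} (fixing each v_j), with sgn(σ,η) := sgn(σ)·∏_i η_i. Define X := Σ_{(σ,η)∈G} sgn(σ,η) · (∏_{i=1}^{m−n} u_{σ(i)}^{η_i(2(m−n−i)+1)}) · (∏_{i=m−n+1}^{m} u_{σ(i)}^{η_i}) · (∏_{j=1}^{n} v_j^{−1}) / ∏_{j=1}^{n} (1 + u_{σ(m−n+j)}^{2η_{m−n+j}}·v_j^{−2}). Then for every τ ∈ S_n and every ζ ∈ {±1}^n, the Q-algebra automorphism of Q(u_1,…,u_m,v_1,…,v_n) sending v_j to v_{τ(j)}^{ζ_j} for all j and fixing each u_i maps X to sgn(τ)·(∏_{j=1}^n ζ_j)·X. -/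
/-!
Write `p j = m - n + j` for the positions paired with the `δ`'s. The summand of `(σ, η)` is
`sgn(σ, η)` times a monomial in the `u (σ i)`, `i < m - n`, times
`∏ j, f (u (σ (p j)) ^ η (p j)) (v j)`, where `f a w = a w⁻¹ / (1 + a² w⁻²) = 1 / (a w⁻¹ + a⁻¹ w)`
satisfies `f a⁻¹ w⁻¹ = f a w`. Hence `vⱼ ↦ v (τ j) ^ ζⱼ` sends the summand of `(σ, η)` to
`sgn(τ) ∏ ζⱼ` times the summand of the element of `G` obtained by permuting the positions `p j`
by `τ⁻¹` and twisting their signs by `ζ`. This is a bijection of `G`, so the sums agree.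
-/

open Finset

namespace BWeylDenominator

section WeylFactor

variable {K : Type*} [Field K]

def weylFactor (a w : K) : K := a * w⁻¹ / (1 + a ^ 2 * w ^ (-2 : ℤ))

lemma weylFactor_inv_inv (a w : K) : weylFactor a⁻¹ w⁻¹ = weylFactor a w := by
  rcases eq_or_ne a 0 with rfl | ha
  · simp [weylFactor]
  rcases eq_or_ne w 0 with rfl | hw
  · simp [weylFactor]
  simp only [weylFactor, zpow_neg, inv_inv]
  field_simp
  ring

lemma weylFactor_zpow_zpow (a w : K) (e z : ℤˣ) :
    weylFactor (a ^ (e : ℤ)) (w ^ (z : ℤ)) = weylFactor (a ^ ((e * z : ℤˣ) : ℤ)) w := by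
  rcases Int.units_eq_one_or z with rfl | rfl
  · simp
  · simpa [zpow_neg] using weylFactor_inv_inv (a ^ (e : ℤ))⁻¹ w

lemma map_weylFactor {L F : Type*} [Field L] [FunLike F K L] [RingHomClass F K L] (φ : F)
    (a w : K) : φ (weylFactor a w) = weylFactor (φ a) (φ w) := by
  simp [weylFactor]

lemma prod_weylFactor_zpow {ι : Type*} [Fintype ι] (a w : ι → K) (e : ι → ℤ) :
    ∏ i, weylFactor (a i ^ e i) (w i) =
      (∏ i, a i ^ e i) * (∏ i, (w i)⁻¹) / ∏ i, (1 + a i ^ (2 * e i) * w i ^ (-2 : ℤ)) := by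
  simp only [weylFactor, ← zpow_natCast, ← zpow_mul, mul_comm (e _), Nat.cast_ofNat,
    prod_div_distrib, prod_mul_distrib]

end WeylFactor

lemma sum_perm_comp_mul {ι G M : Type*} [Fintype ι] [DecidableEq ι] [Group G] [Fintype G]
    [AddCommMonoid M] (π : Equiv.Perm ι) (g : ι → G) (F : Equiv.Perm ι → (ι → G) → M) :
    ∑ σ, ∑ η : ι → G, F (σ * π) (fun i => η (π i) * g (π i)) = ∑ σ, ∑ η, F σ η := by
  refine Fintype.sum_equiv (Equiv.mulRight π) _ _ fun σ => ?_
  let e : (ι → G) ≃ (ι → G) :=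
    ((Equiv.mulRight g).trans (Equiv.arrowCongr π.symm (Equiv.refl G)))
  exact Fintype.sum_equiv e _ _ fun η => rfl

lemma prod_extend_one {ι κ M : Type*} [Fintype ι] [Fintype κ] [CommMonoid M] (p : κ ↪ ι)
    (f : κ → M) : ∏ i, Function.extend p f 1 i = ∏ k, f k :=
  (Fintype.prod_of_injective p p.injective _ _
    (fun i hi => Function.extend_apply' f (1 : ι → M) i hi)
    fun k => (p.injective.extend_apply _ _ k).symm).symm

section LastBlock

variable {m n : ℕ} (h : n ≤ m)

def lastBlock : Fin n ↪ Fin m where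
  toFun j := ⟨m - n + j, by omega⟩
  inj' i j hij := by simpa [Fin.ext_iff] using hij

lemma mem_range_lastBlock {i : Fin m} : i ∈ Set.range (lastBlock h) ↔ m - n ≤ i := by
  refine ⟨fun ⟨j, hj⟩ => hj ▸ Nat.le_add_right _ _, fun hi => ⟨⟨i - (m - n), by omega⟩, ?_⟩⟩
  ext
  change m - n + (i - (m - n)) = (i : ℕ)
  omega

lemma prod_filter_le_eq_prod_lastBlock {M : Type*} [CommMonoid M] (f : Fin m → M) :
    ∏ i ∈ univ.filter (fun i : Fin m => m - n ≤ (i : ℕ)), f i = ∏ j, f (lastBlock h j) := by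
  rw [prod_filter]
  refine (Fintype.prod_of_injective _ (lastBlock h).injective _ _ (fun i hi => ?_)
    fun j => ?_).symm
  · rw [if_neg (mt (mem_range_lastBlock h).2 hi)]
  · rw [if_pos ((mem_range_lastBlock h).1 ⟨j, rfl⟩)]

end LastBlock

section WeylTerm

open Equiv

variable {K : Type*} [Field K] {m n : ℕ} (h : n ≤ m) (u : Fin m → K) (v : Fin n → K)

def headMonomial (n : ℕ) (u : Fin m → K) (σ : Perm (Fin m)) (η : Fin m → ℤˣ) : K :=
  ∏ i ∈ univ.filter (fun i : Fin m => (i : ℕ) < m - n),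
    u (σ i) ^ ((η i : ℤ) * (2 * ((m : ℤ) - (n : ℤ)) - 2 * (i : ℤ) - 1))

def tailProduct (σ : Perm (Fin m)) (η : Fin m → ℤˣ) : K :=
  ∏ j, weylFactor (u (σ (lastBlock h j)) ^ (η (lastBlock h j) : ℤ)) (v j)

def weylTerm (σ : Perm (Fin m)) (η : Fin m → ℤˣ) : K :=
  (((Perm.sign σ * ∏ i, η i : ℤˣ) : ℤ) : K) * (headMonomial n u σ η * tailProduct h u v σ η)

lemma headMonomial_mul_comp (σ π : Perm (Fin m)) (η g : Fin m → ℤˣ)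
    (hπ : ∀ i : Fin m, (i : ℕ) < m - n → π i = i)
    (hg : ∀ i : Fin m, (i : ℕ) < m - n → g i = 1) :
    headMonomial n u (σ * π) (fun i => η (π i) * g (π i)) = headMonomial n u σ η := by
  refine prod_congr rfl fun i hi => ?_
  rw [mem_filter] at hi
  simp only [Perm.mul_apply, hπ i hi.2, hg i hi.2, mul_one]

lemma map_headMonomial {F : Type*} [FunLike F K K] [RingHomClass F K K] (φ : F)
    (hφu : ∀ i, φ (u i) = u i) (σ : Perm (Fin m)) (η : Fin m → ℤˣ) :
    φ (headMonomial n u σ η) = headMonomial n u σ η := by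
  simp only [headMonomial, map_prod, map_zpow₀, hφu]

variable (τ : Perm (Fin n)) (ζ : Fin n → ℤˣ)

lemma viaFintypeEmbedding_inv_lastBlock (j : Fin n) :
    τ⁻¹.viaFintypeEmbedding (lastBlock h) (lastBlock h (τ j)) = lastBlock h j := by
  simp [Perm.viaFintypeEmbedding_apply_image]

lemma viaFintypeEmbedding_lastBlock_of_lt {i : Fin m} (hi : (i : ℕ) < m - n) :
    τ.viaFintypeEmbedding (lastBlock h) i = i :=
  Perm.viaFintypeEmbedding_apply_notMem_range _ _ fun hr => by
    have := (mem_range_lastBlock h).1 hr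
    omega

lemma extend_lastBlock_of_lt {i : Fin m} (hi : (i : ℕ) < m - n) :
    Function.extend (lastBlock h) ζ 1 i = 1 :=
  Function.extend_apply' _ _ _ fun ⟨j, hj⟩ => by
    have := (mem_range_lastBlock h).1 ⟨j, hj⟩
    omega

lemma sign_mul_prod_comp (σ : Perm (Fin m)) (η : Fin m → ℤˣ) :
    Perm.sign (σ * τ⁻¹.viaFintypeEmbedding (lastBlock h)) *
        ∏ i, η (τ⁻¹.viaFintypeEmbedding (lastBlock h) i) *
          Function.extend (lastBlock h) ζ 1 (τ⁻¹.viaFintypeEmbedding (lastBlock h) i) =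
      (Perm.sign τ * ∏ j, ζ j) * (Perm.sign σ * ∏ i, η i) := by
  rw [Equiv.prod_comp _ (fun i => η i * Function.extend (lastBlock h) ζ 1 i), prod_mul_distrib,
    prod_extend_one, Perm.sign_mul, Perm.viaFintypeEmbedding_sign, Perm.sign_inv]
  ac_rfl

lemma map_tailProduct {F : Type*} [FunLike F K K] [RingHomClass F K K] (φ : F)
    (hφu : ∀ i, φ (u i) = u i) (hφv : ∀ j, φ (v j) = v (τ j) ^ (ζ j : ℤ))
    (σ : Perm (Fin m)) (η : Fin m → ℤˣ) :
    φ (tailProduct h u v σ η) =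
      tailProduct h u v (σ * τ⁻¹.viaFintypeEmbedding (lastBlock h))
        (fun i => η (τ⁻¹.viaFintypeEmbedding (lastBlock h) i) *
          Function.extend (lastBlock h) ζ 1 (τ⁻¹.viaFintypeEmbedding (lastBlock h) i)) := by
  rw [tailProduct, tailProduct, map_prod]
  refine Fintype.prod_equiv τ _ _ fun j => ?_
  simp only [Perm.mul_apply, viaFintypeEmbedding_inv_lastBlock,
    (lastBlock h).injective.extend_apply, map_weylFactor, map_zpow₀, hφu, hφv]
  exact weylFactor_zpow_zpow _ _ _ _

lemma map_weylTerm {F : Type*} [FunLike F K K] [RingHomClass F K K] (φ : F)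
    (hφu : ∀ i, φ (u i) = u i) (hφv : ∀ j, φ (v j) = v (τ j) ^ (ζ j : ℤ))
    (σ : Perm (Fin m)) (η : Fin m → ℤˣ) :
    φ (weylTerm h u v σ η) =
      (((Perm.sign τ * ∏ j, ζ j : ℤˣ) : ℤ) : K) *
        weylTerm h u v (σ * τ⁻¹.viaFintypeEmbedding (lastBlock h))
          (fun i => η (τ⁻¹.viaFintypeEmbedding (lastBlock h) i) *
            Function.extend (lastBlock h) ζ 1 (τ⁻¹.viaFintypeEmbedding (lastBlock h) i)) := by
  have hc : (((Perm.sign τ * ∏ j, ζ j : ℤˣ) : ℤ) : K) * (((Perm.sign τ * ∏ j, ζ j : ℤˣ) : ℤ) : K)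
      = 1 := by
    rw [← Int.cast_mul, Int.units_coe_mul_self, Int.cast_one]
  rw [weylTerm, weylTerm, sign_mul_prod_comp, map_mul, map_mul, map_intCast,
    map_headMonomial u φ hφu, map_tailProduct h u v τ ζ φ hφu hφv,
    headMonomial_mul_comp u σ _ η _ (fun _ => viaFintypeEmbedding_lastBlock_of_lt h τ⁻¹)
      (fun _ => extend_lastBlock_of_lt h ζ), Units.val_mul (Perm.sign τ * ∏ j, ζ j),
    Int.cast_mul]
  simp only [← mul_assoc, hc, one_mul]

lemma map_sum_weylTerm {F : Type*} [FunLike F K K] [RingHomClass F K K] (φ : F)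
    (hφu : ∀ i, φ (u i) = u i) (hφv : ∀ j, φ (v j) = v (τ j) ^ (ζ j : ℤ)) :
    φ (∑ σ, ∑ η, weylTerm h u v σ η) =
      (((Perm.sign τ * ∏ j, ζ j : ℤˣ) : ℤ) : K) * ∑ σ, ∑ η, weylTerm h u v σ η := by
  conv_rhs => rw [← sum_perm_comp_mul (τ⁻¹.viaFintypeEmbedding (lastBlock h))
    (Function.extend (lastBlock h) ζ 1)]
  simp only [map_sum, map_weylTerm h u v τ ζ φ hφu hφv, mul_sum]

end WeylTerm

end BWeylDenominator

open BWeylDenominator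

/-- Skew-invariance of the right-hand side `X` of the Weyl denominator
identity for `B(m,n) = osp(2m+1|2n)`, `m > n`, under the group `W₂` of
signed permutations of the `δ`'s: any (automatically `ℚ`-linear) field
automorphism `φ` of `ℚ(u,v)` fixing the `u`'s and sending `vⱼ ↦ v_{τ(j)}^{ζⱼ}`
maps `X` to `sgn(τ)·(∏ζⱼ)·X`. -/
theorem B_X_skew_invariant (m n : ℕ) (hmn : n < m)
    (K : Type*) [Field K]
    (u : Fin m → K) (v : Fin n → K)
    (X : K)
    (hX : X = ∑ σ : Equiv.Perm (Fin m), ∑ η : Fin m → ℤˣ,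
        (((Equiv.Perm.sign σ * ∏ i, η i : ℤˣ) : ℤ) : K) *
          ((∏ i ∈ Finset.univ.filter (fun i : Fin m => (i : ℕ) < m - n),
              u (σ i) ^ (((η i) : ℤ) * (2 * ((m : ℤ) - (n : ℤ)) - 2 * (i : ℤ) - 1))) *
           (∏ i ∈ Finset.univ.filter (fun i : Fin m => m - n ≤ (i : ℕ)),
              u (σ i) ^ ((η i : ℤ))) *
           (∏ j : Fin n, (v j)⁻¹) /
           ∏ j : Fin n,
             (1 + u (σ ⟨m - n + (j : ℕ), by have := j.isLt; omega⟩) ^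
                (2 * ((η ⟨m - n + (j : ℕ), by have := j.isLt; omega⟩ : ℤ))) *
              v j ^ (-2 : ℤ))))
    (τ : Equiv.Perm (Fin n)) (ζ : Fin n → ℤˣ) (φ : K ≃+* K)
    (hφu : ∀ i, φ (u i) = u i)
    (hφv : ∀ j, φ (v j) = v (τ j) ^ ((ζ j : ℤ))) :
    φ X = (((Equiv.Perm.sign τ * ∏ j, ζ j : ℤˣ) : ℤ) : K) * X := by
  have hXterm : X = ∑ σ, ∑ η, weylTerm hmn.le u v σ η := by
    rw [hX]
    refine sum_congr rfl fun σ _ => sum_congr rfl fun η _ => ?_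
    rw [weylTerm, tailProduct, prod_weylFactor_zpow, mul_assoc, mul_div_assoc,
      prod_filter_le_eq_prod_lastBlock hmn.le]
    rfl
  rw [hXterm]
  exact map_sum_weylTerm hmn.le u v τ ζ φ hφu hφv
end
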